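/- arXiv:math/0403417 — 9 statements merged into one kernel-verified Lean document; each statement's English description precedes it below -/
import Mathlib

section
/- Let L be a subset of Z^3 that is a lower set (order ideal) for the product order, with L contained in C(0,0,0) = {(i,j,k) : i,j,k ≤ 0} and with U = C(0,0,0) \ L finite. Let I = {(i,j,k) ∈ L : (i+1,j+1,k+1) ∉ L}. Then for every point (i,j,k) with -1 ≤ i+j+k ≤ 1 there exists a unique integer h such that (i+h, j+h, k+h) ∈ I. -/
/-- The lower cone of a point in `ℤ³`. -/
def LowerCone (p : ℤ × ℤ × ℤ) : Set (ℤ × ℤ × ℤ) :=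
  {q | q.1 ≤ p.1 ∧ q.2.1 ≤ p.2.1 ∧ q.2.2 ≤ p.2.2}

/-- `L` is a lower set (order ideal) for the product order on `ℤ³`. -/
def IsLowerSet3 (L : Set (ℤ × ℤ × ℤ)) : Prop :=
  ∀ p ∈ L, LowerCone p ⊆ L

/-- for every point with coordinate sum between -1 and 1, there is a
unique shift `h` along the main diagonal landing in the initial conditions
`I = {p ∈ L : p + (1,1,1) ∉ L}`. -/
theorem stmt0 (L : Set (ℤ × ℤ × ℤ))
    (hlow : IsLowerSet3 L)
    (hsub : L ⊆ LowerCone (0, 0, 0))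
    (hfin : (LowerCone (0, 0, 0) \ L).Finite)
    (i j k : ℤ) (h1 : -1 ≤ i + j + k) (h2 : i + j + k ≤ 1) :
    ∃! h : ℤ, (i + h, j + h, k + h) ∈ L ∧ (i + h + 1, j + h + 1, k + h + 1) ∉ L := by
  -- downward closure of the diagonal slice
  have key : ∀ h h' : ℤ, h' ≤ h → (i + h, j + h, k + h) ∈ L →
      (i + h', j + h', k + h') ∈ L := by
    intro h h' hle hm
    refine hlow _ hm ⟨?_, ?_, ?_⟩ <;> simp <;> omega
  -- bounded above
  have bdd : ∀ h : ℤ, (i + h, j + h, k + h) ∈ L → h ≤ 0 := by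
    intro h hm
    have := hsub hm
    simp only [LowerCone, Set.mem_setOf_eq] at this
    omega
  -- nonempty
  have hne : ∃ h : ℤ, (i + h, j + h, k + h) ∈ L := by
    by_contra hcon
    push_neg at hcon
    set M : ℤ := max i (max j k) with hM
    have hinf : (LowerCone (0, 0, 0) \ L).Infinite := by
      refine Set.infinite_of_injective_forall_mem
        (f := fun n : ℕ => (i + (-M - n), j + (-M - n), k + (-M - n))) ?_ ?_
      · intro a b hab
        simp only [Prod.mk.injEq] at hab
        omega
      · intro n
        refine ⟨⟨?_, ?_, ?_⟩, hcon _⟩ <;> simp <;> omega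
    exact hinf hfin
  -- greatest element
  obtain ⟨h0, hP, hub⟩ := Int.exists_greatest_of_bdd ⟨0, bdd⟩ hne
  refine ⟨h0, ⟨hP, ?_⟩, ?_⟩
  · intro hmem
    have : (i + (h0 + 1), j + (h0 + 1), k + (h0 + 1)) ∈ L := by
      convert hmem using 2 <;> ring
    have := hub _ this
    omega
  · intro h ⟨hmemh, hnot⟩
    have hle : h ≤ h0 := hub _ hmemh
    rcases lt_or_eq_of_le hle with hlt | heq
    · exfalso
      apply hnot
      have : (i + (h + 1), j + (h + 1), k + (h + 1)) ∈ L := key h0 (h + 1) (by omega) hP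
      convert this using 2 <;> ring
    · exact heq
end

section
/- Let L ⊆ C(0,0,0) be a lower set in Z^3 with U = C(0,0,0) \ L finite and nonempty (so (0,0,0) ∉ L). Then there exist i,j,k ≤ 0 such that (i,j,k) ∈ U while all seven points (i-1,j,k), (i,j-1,k), (i,j,k-1), (i,j-1,k-1), (i-1,j,k-1), (i-1,j-1,k), (i-1,j-1,k-1) lie in I = {(p,q,r) ∈ L : (p+1,q+1,r+1) ∉ L}. -/
/-- The initial conditions determined by a lower set `L`. -/
def InitConds (L : Set (ℤ × ℤ × ℤ)) : Set (ℤ × ℤ × ℤ) :=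
  {p ∈ L | (p.1 + 1, p.2.1 + 1, p.2.2 + 1) ∉ L}

/-!
Take `(i, j, k) ∈ U` with `i + j + k` minimal. Each of the seven points `q` below it is in `L`,
since its coordinate sum is smaller; and `q + (1, 1, 1)` dominates `(i, j, k) ∉ L`, so
`q + (1, 1, 1) ∉ L` because `L` is a lower set.
-/

theorem exists_mem_diff_forall_sum_lt_mem (L : Set (ℤ × ℤ × ℤ))
    (hfin : (LowerCone (0, 0, 0) \ L).Finite) (hne : (LowerCone (0, 0, 0) \ L).Nonempty) :
    ∃ i j k : ℤ, (i, j, k) ∈ LowerCone (0, 0, 0) \ L ∧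
      ∀ a b c : ℤ, a ≤ i → b ≤ j → c ≤ k → a + b + c < i + j + k → (a, b, c) ∈ L := by
  obtain ⟨⟨i, j, k⟩, hp, hmin⟩ :=
    Set.exists_min_image _ (fun q : ℤ × ℤ × ℤ => q.1 + q.2.1 + q.2.2) hfin hne
  refine ⟨i, j, k, hp, fun a b c ha hb hc hsum => ?_⟩
  obtain ⟨⟨hi, hj, hk⟩, -⟩ := hp
  by_contra haL
  have hle := hmin (a, b, c) ⟨⟨ha.trans hi, hb.trans hj, hc.trans hk⟩, haL⟩
  exact hle.not_gt hsum

theorem mem_initConds_of_le_add_one {L : Set (ℤ × ℤ × ℤ)} (hlow : IsLowerSet3 L)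
    {i j k a b c : ℤ} (hp : (i, j, k) ∉ L) (hq : (a, b, c) ∈ L)
    (ha : i ≤ a + 1) (hb : j ≤ b + 1) (hc : k ≤ c + 1) : (a, b, c) ∈ InitConds L :=
  ⟨hq, fun hL => hp (hlow _ hL ⟨ha, hb, hc⟩)⟩

theorem stmt1_general (L : Set (ℤ × ℤ × ℤ))
    (hlow : IsLowerSet3 L)
    (hfin : (LowerCone (0, 0, 0) \ L).Finite)
    (hne : (LowerCone (0, 0, 0) \ L).Nonempty) :
    ∃ i j k : ℤ, i ≤ 0 ∧ j ≤ 0 ∧ k ≤ 0 ∧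
      (i, j, k) ∈ LowerCone (0, 0, 0) \ L ∧
      (i - 1, j, k) ∈ InitConds L ∧
      (i, j - 1, k) ∈ InitConds L ∧
      (i, j, k - 1) ∈ InitConds L ∧
      (i, j - 1, k - 1) ∈ InitConds L ∧
      (i - 1, j, k - 1) ∈ InitConds L ∧
      (i - 1, j - 1, k) ∈ InitConds L ∧
      (i - 1, j - 1, k - 1) ∈ InitConds L := by
  obtain ⟨i, j, k, hp, hmin⟩ := exists_mem_diff_forall_sum_lt_mem L hfin hne
  obtain ⟨⟨hi, hj, hk⟩, hpL⟩ := hp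
  refine ⟨i, j, k, hi, hj, hk, ⟨⟨hi, hj, hk⟩, hpL⟩, ?_, ?_, ?_, ?_, ?_, ?_, ?_⟩ <;>
    exact mem_initConds_of_le_add_one hlow hpL (hmin _ _ _ (by omega) (by omega) (by omega)
      (by omega)) (by omega) (by omega) (by omega)

/-- local minimum lemma: if `U = C(0,0,0) \ L` is finite and nonempty,
there is `(i,j,k) ∈ U` with `i,j,k ≤ 0` all seven of whose strict lower neighbors lie
in the initial conditions `I`. -/
theorem stmt1 (L : Set (ℤ × ℤ × ℤ))
    (hlow : IsLowerSet3 L)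
    (hsub : L ⊆ LowerCone (0, 0, 0))
    (hfin : (LowerCone (0, 0, 0) \ L).Finite)
    (hne : (LowerCone (0, 0, 0) \ L).Nonempty) :
    ∃ i j k : ℤ, i ≤ 0 ∧ j ≤ 0 ∧ k ≤ 0 ∧
      (i, j, k) ∈ LowerCone (0, 0, 0) \ L ∧
      (i - 1, j, k) ∈ InitConds L ∧
      (i, j - 1, k) ∈ InitConds L ∧
      (i, j, k - 1) ∈ InitConds L ∧
      (i, j - 1, k - 1) ∈ InitConds L ∧
      (i - 1, j, k - 1) ∈ InitConds L ∧
      (i - 1, j - 1, k) ∈ InitConds L ∧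
      (i - 1, j - 1, k - 1) ∈ InitConds L :=
  stmt1_general L hlow hfin hne
end

section
/- Let L ⊆ C(0,0,0) be a lower set in Z^3 with U = C(0,0,0) \ L finite, and let I = {(i,j,k) ∈ L : (i+1,j+1,k+1) ∉ L}. Let N be a cutoff for I, i.e., (i,j,k) ∈ I whenever i+j+k ≤ -N and max{i,j,k} = 0 (with i,j,k ≤ 0), and (i,j,k) ∉ I whenever i+j+k ≤ -N-3 and max{i,j,k} < 0. Then J = {(i,j,k) ∈ I : i+j+k ≥ -N-2} contains exactly 3·C(N+3,2)+1 points and exactly 3·C(N+2,2) rhombi, where a rhombus is any of the sets r_a(i,j,k) = {(i,j,k),(i,j-1,k),(i,j,k-1),(i,j-1,k-1)}, r_b(i,j,k) = {(i,j,k),(i-1,j,k),(i,j,k-1),(i-1,j,k-1)}, r_c(i,j,k) = {(i,j,k),(i-1,j,k),(i,j-1,k),(i-1,j-1,k)} contained entirely in I. -/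
/-- The type-`a` rhombus at `(i,j,k)`. -/
def rhombA (i j k : ℤ) : Set (ℤ × ℤ × ℤ) :=
  {(i, j, k), (i, j - 1, k), (i, j, k - 1), (i, j - 1, k - 1)}

/-- The type-`b` rhombus at `(i,j,k)`. -/
def rhombB (i j k : ℤ) : Set (ℤ × ℤ × ℤ) :=
  {(i, j, k), (i - 1, j, k), (i, j, k - 1), (i - 1, j, k - 1)}

/-- The type-`c` rhombus at `(i,j,k)`. -/
def rhombC (i j k : ℤ) : Set (ℤ × ℤ × ℤ) :=
  {(i, j, k), (i - 1, j, k), (i, j - 1, k), (i - 1, j - 1, k)}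

/-- `N` is a cutoff for the initial conditions `I`. -/
def IsCutoff (I : Set (ℤ × ℤ × ℤ)) (N : ℕ) : Prop :=
  (∀ i j k : ℤ, i ≤ 0 → j ≤ 0 → k ≤ 0 → i + j + k ≤ -(N : ℤ) →
    max i (max j k) = 0 → (i, j, k) ∈ I) ∧
  (∀ i j k : ℤ, i + j + k ≤ -(N : ℤ) - 3 → max i (max j k) < 0 → (i, j, k) ∉ I)

open Set

lemma lowerCone_eq_Iic (p : ℤ × ℤ × ℤ) : LowerCone p = Iic p := by
  ext q
  simp [LowerCone, Prod.le_def]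

lemma isLowerSet3_iff {L : Set (ℤ × ℤ × ℤ)} : IsLowerSet3 L ↔ IsLowerSet L := by
  simp only [IsLowerSet3, lowerCone_eq_Iic, IsLowerSet]
  exact ⟨fun h _ _ hba ha => h _ ha hba, fun h _ ha _ hb => h hb ha⟩

lemma ordConnected_initConds {L : Set (ℤ × ℤ × ℤ)} (hL : IsLowerSet L) :
    (InitConds L).OrdConnected := by
  refine ⟨fun r hr p hp q ⟨hrq, hqp⟩ => ⟨hL hqp hp.1, fun hq => hr.2 (hL ?_ hq)⟩⟩
  exact add_le_add_left hrq 1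

lemma rhombA_eq_Icc (i j k : ℤ) : rhombA i j k = Icc (i, j - 1, k - 1) (i, j, k) := by
  ext ⟨x, y, z⟩
  simp only [rhombA, mem_insert_iff, mem_singleton_iff, mem_Icc, Prod.mk_le_mk, Prod.mk.injEq]
  omega

lemma rhombB_eq_Icc (i j k : ℤ) : rhombB i j k = Icc (i - 1, j, k - 1) (i, j, k) := by
  ext ⟨x, y, z⟩
  simp only [rhombB, mem_insert_iff, mem_singleton_iff, mem_Icc, Prod.mk_le_mk, Prod.mk.injEq]
  omega

lemma rhombC_eq_Icc (i j k : ℤ) : rhombC i j k = Icc (i - 1, j - 1, k) (i, j, k) := by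
  ext ⟨x, y, z⟩
  simp only [rhombC, mem_insert_iff, mem_singleton_iff, mem_Icc, Prod.mk_le_mk, Prod.mk.injEq]
  omega

def rhombDiagonals : Set (ℤ × ℤ × ℤ) := {(0, 1, 1), (1, 0, 1), (1, 1, 0)}

lemma mem_rhombDiagonals {d : ℤ × ℤ × ℤ} :
    d ∈ rhombDiagonals ↔ d = (0, 1, 1) ∨ d = (1, 0, 1) ∨ d = (1, 1, 0) := Iff.rfl

lemma le_of_sub_mem_rhombDiagonals {q p : ℤ × ℤ × ℤ} (h : p - q ∈ rhombDiagonals) : q ≤ p := by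
  obtain ⟨q1, q2, q3⟩ := q
  obtain ⟨p1, p2, p3⟩ := p
  simp only [mem_rhombDiagonals, Prod.mk_sub_mk, Prod.mk.injEq] at h
  simp only [Prod.mk_le_mk]
  omega

lemma rhombi_eq_image_Icc {J : Set (ℤ × ℤ × ℤ)} (hJ : J.OrdConnected) :
    {R | (∃ i j k : ℤ, R = rhombA i j k ∨ R = rhombB i j k ∨ R = rhombC i j k) ∧ R ⊆ J} =
      (fun x : (ℤ × ℤ × ℤ) × (ℤ × ℤ × ℤ) => Icc x.1 x.2) ''
        {x | x.1 ∈ J ∧ x.2 ∈ J ∧ x.2 - x.1 ∈ rhombDiagonals} := by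
  ext R
  constructor
  · rintro ⟨⟨i, j, k, rfl | rfl | rfl⟩, hRJ⟩
    all_goals
      simp only [rhombA_eq_Icc, rhombB_eq_Icc, rhombC_eq_Icc] at hRJ ⊢
      exact ⟨(_, (i, j, k)), ⟨hRJ ⟨le_rfl, by simp [Prod.le_def]⟩,
        hRJ ⟨by simp [Prod.le_def], le_rfl⟩, by simp [mem_rhombDiagonals]⟩, rfl⟩
  · rintro ⟨⟨q, ⟨i, j, k⟩⟩, ⟨hq, hp, hd⟩, rfl⟩
    refine ⟨⟨i, j, k, ?_⟩, hJ.out hq hp⟩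
    simp only [rhombA_eq_Icc, rhombB_eq_Icc, rhombC_eq_Icc, Icc_eq_Icc_iff
      (le_of_sub_mem_rhombDiagonals hd)]
    obtain ⟨q1, q2, q3⟩ := q
    simp only [mem_rhombDiagonals, Prod.mk_sub_mk, Prod.mk.injEq, and_true] at hd ⊢
    omega

lemma ncard_rhombi_eq {J : Set (ℤ × ℤ × ℤ)} (hJ : J.OrdConnected) :
    {R | (∃ i j k : ℤ, R = rhombA i j k ∨ R = rhombB i j k ∨ R = rhombC i j k) ∧ R ⊆ J}.ncard =
      {x : (ℤ × ℤ × ℤ) × (ℤ × ℤ × ℤ) | x.1 ∈ J ∧ x.2 ∈ J ∧ x.2 - x.1 ∈ rhombDiagonals}.ncard := by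
  rw [rhombi_eq_image_Icc hJ]
  refine InjOn.ncard_image ?_
  rintro ⟨q, p⟩ ⟨-, -, hd⟩ ⟨q', p'⟩ - h
  exact Prod.ext_iff.mpr ((Icc_eq_Icc_iff (le_of_sub_mem_rhombDiagonals hd)).mp h)

lemma eq_of_le_of_sub_mem_rhombDiagonals {lo q p hi : ℤ × ℤ × ℤ} (hlo : lo ≤ q) (hhi : p ≤ hi)
    (hqp : p - q ∈ rhombDiagonals) (hspan : hi - lo ∈ rhombDiagonals) : q = lo ∧ p = hi := by
  obtain ⟨l1, l2, l3⟩ := lo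
  obtain ⟨q1, q2, q3⟩ := q
  obtain ⟨p1, p2, p3⟩ := p
  obtain ⟨h1, h2, h3⟩ := hi
  simp only [mem_rhombDiagonals, Prod.mk_sub_mk, Prod.mk.injEq] at hqp hspan
  simp only [Prod.mk_le_mk] at hlo hhi
  simp only [Prod.mk.injEq]
  omega

def surfacePt (f : ℤ × ℤ → ℤ) (v : ℤ × ℤ) : ℤ × ℤ × ℤ := (f v, f v + v.1, f v + v.2)

lemma surfacePt_injective (f : ℤ × ℤ → ℤ) : Function.Injective (surfacePt f) := by
  rintro ⟨a, b⟩ ⟨a', b'⟩ h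
  simp only [surfacePt, Prod.mk.injEq] at h ⊢
  omega

def lowerTriangle (v : ℤ × ℤ) : Set (ℤ × ℤ) := {v, v - (0, 1), v - (1, 1)}

lemma mem_lowerTriangle {u v : ℤ × ℤ} :
    u ∈ lowerTriangle v ↔ u = v ∨ u = v - (0, 1) ∨ u = v - (1, 1) := Iff.rfl

lemma eq_of_mem_lowerTriangle {a b v w : ℤ × ℤ} (hab : a ≠ b) (hav : a ∈ lowerTriangle v)
    (hbv : b ∈ lowerTriangle v) (haw : a ∈ lowerTriangle w) (hbw : b ∈ lowerTriangle w) :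
    v = w := by
  obtain ⟨a1, a2⟩ := a
  obtain ⟨b1, b2⟩ := b
  obtain ⟨v1, v2⟩ := v
  obtain ⟨w1, w2⟩ := w
  simp only [mem_lowerTriangle, Prod.mk_sub_mk, Prod.mk.injEq, ne_eq] at *
  omega

lemma exists_lowerTriangle_of_surfacePt_sub_mem {f : ℤ × ℤ → ℤ} {a b : ℤ × ℤ}
    (h : surfacePt f b - surfacePt f a ∈ rhombDiagonals) :
    ∃ v, a ∈ lowerTriangle v ∧ b ∈ lowerTriangle v := by
  obtain ⟨a1, a2⟩ := a
  obtain ⟨b1, b2⟩ := b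
  simp only [surfacePt, mem_rhombDiagonals, Prod.mk_sub_mk, Prod.mk.injEq] at h
  simp only [mem_lowerTriangle, Prod.exists, Prod.mk_sub_mk, Prod.mk.injEq]
  rcases h with h | h | h
  · exact ⟨b1, b2, by omega⟩
  · exact ⟨a1, a2 + 1, by omega⟩
  · exact ⟨a1, a2, by omega⟩

lemma exists_rhombDiagonal_lowerTriangle {f : ℤ × ℤ → ℤ} (hf : Antitone f)
    (hf' : ∀ v, f (v - (1, 1)) ≤ f v + 1) (v : ℤ × ℤ) :
    ∃ q ∈ lowerTriangle v, ∃ p ∈ lowerTriangle v, surfacePt f p - surfacePt f q ∈ rhombDiagonals ∧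
      ∀ w ∈ lowerTriangle v, surfacePt f w ∈ Icc (surfacePt f q) (surfacePt f p) := by
  have h01 : f v ≤ f (v - (0, 1)) := hf (by simp [Prod.le_def])
  have h12 : f (v - (0, 1)) ≤ f (v - (1, 1)) := hf (by simp [Prod.le_def])
  have h20 := hf' v
  obtain ⟨a, b⟩ := v
  simp only [Prod.mk_sub_mk, sub_zero] at h01 h12 h20
  -- the heights rise by at most one in total, so at most one of the two steps is a jump
  rcases (by omega : f (a - 1, b - 1) = f (a, b) ∨ f (a, b - 1) = f (a, b) + 1 ∨
      f (a, b - 1) = f (a, b) ∧ f (a - 1, b - 1) = f (a, b) + 1) with h | h | h <;>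
    [refine ⟨(a - 1, b - 1), ?_, (a, b), ?_⟩; refine ⟨(a, b), ?_, (a, b - 1), ?_⟩;
      refine ⟨(a, b - 1), ?_, (a - 1, b - 1), ?_⟩] <;>
    simp only [mem_lowerTriangle, forall_eq_or_imp, forall_eq, Prod.mk_sub_mk, sub_zero, surfacePt,
      mem_rhombDiagonals, mem_Icc, Prod.mk_le_mk, Prod.mk.injEq, true_or, or_true, true_and] <;>
    omega

theorem ncard_rhombDiagonalPairs_eq {f : ℤ × ℤ → ℤ} (hf : Antitone f)
    (hf' : ∀ v, f (v - (1, 1)) ≤ f v + 1) {J : Set (ℤ × ℤ × ℤ)} (hJ : J.OrdConnected)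
    (hJf : J ⊆ range (surfacePt f)) :
    {x : (ℤ × ℤ × ℤ) × (ℤ × ℤ × ℤ) | x.1 ∈ J ∧ x.2 ∈ J ∧ x.2 - x.1 ∈ rhombDiagonals}.ncard =
      {v | surfacePt f '' lowerTriangle v ⊆ J}.ncard := by
  choose lo hlo hi hhi hspan hIcc using exists_rhombDiagonal_lowerTriangle hf hf'
  symm
  refine ncard_congr (fun v _ => (surfacePt f (lo v), surfacePt f (hi v))) ?_ ?_ ?_
  · intro v hv
    exact ⟨hv (mem_image_of_mem _ (hlo v)), hv (mem_image_of_mem _ (hhi v)), hspan v⟩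
  · intro v w _ _ h
    simp only [Prod.mk.injEq, (surfacePt_injective f).eq_iff] at h
    have hne : lo v ≠ hi v := by
      intro heq
      simpa [heq, mem_rhombDiagonals, Prod.ext_iff] using hspan v
    exact eq_of_mem_lowerTriangle hne (hlo v) (hhi v) (h.1 ▸ hlo w) (h.2 ▸ hhi w)
  · rintro ⟨q, p⟩ ⟨hq, hp, hd⟩
    obtain ⟨a, rfl⟩ := hJf hq
    obtain ⟨b, rfl⟩ := hJf hp
    obtain ⟨v, ha, hb⟩ := exists_lowerTriangle_of_surfacePt_sub_mem hd
    obtain ⟨hav, hbv⟩ := eq_of_le_of_sub_mem_rhombDiagonals (hIcc v a ha).1 (hIcc v b hb).2 hd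
      (hspan v)
    refine ⟨v, ?_, by rw [hav, hbv]⟩
    rintro _ ⟨w, hw, rfl⟩
    exact hJ.out hq hp (hav ▸ hbv ▸ hIcc v w hw)

noncomputable def height (L : Set (ℤ × ℤ × ℤ)) (v : ℤ × ℤ) : ℤ :=
  sSup {m : ℤ | (m, m + v.1, m + v.2) ∈ L}

lemma mem_iff_le_height {L : Set (ℤ × ℤ × ℤ)} (hL : IsLowerSet L) (hsub : L ⊆ Iic 0)
    (hfin : (Iic 0 \ L).Finite) (x y z : ℤ) : (x, y, z) ∈ L ↔ x ≤ height L (y - x, z - x) := by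
  set ray : ℤ → ℤ × ℤ × ℤ := fun m => (m, m + (y - x), m + (z - x))
  have hray : Function.Injective ray := fun m m' h => congrArg Prod.fst h
  set s := {m : ℤ | ray m ∈ L}
  have hbdd : BddAbove s := ⟨0, fun m hm => (hsub hm).1⟩
  have hne : s.Nonempty := by
    by_contra hempty
    have hsubset : ray '' Iic (-max 0 (max (y - x) (z - x))) ⊆ Iic 0 \ L := by
      rintro _ ⟨m, hm, rfl⟩
      refine ⟨?_, fun hmL => hempty ⟨m, hmL⟩⟩
      simp only [mem_Iic, ray, Prod.le_def, Prod.fst_zero, Prod.snd_zero] at hm ⊢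
      omega
    exact ((Iic_infinite _).image hray.injOn).mono hsubset hfin
  have hxyz : (x, y, z) = ray x := by simp [ray]
  rw [hxyz]
  refine ⟨fun hx => le_csSup hbdd hx, fun hx => hL ?_ (Int.csSup_mem hne hbdd)⟩
  exact ⟨hx, add_le_add_left hx _, add_le_add_left hx _⟩

section SubgraphOfHeight

variable {L : Set (ℤ × ℤ × ℤ)} {f : ℤ × ℤ → ℤ}

lemma surfacePt_mem (hLf : ∀ x y z, (x, y, z) ∈ L ↔ x ≤ f (y - x, z - x)) (v : ℤ × ℤ) :
    surfacePt f v ∈ L := by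
  simp [surfacePt, hLf]

lemma initConds_eq_range (hLf : ∀ x y z, (x, y, z) ∈ L ↔ x ≤ f (y - x, z - x)) :
    InitConds L = range (surfacePt f) := by
  ext ⟨x, y, z⟩
  simp only [InitConds, mem_ofPred_eq, hLf, add_sub_add_right_eq_sub, mem_range, surfacePt,
    Prod.mk.injEq, Prod.exists]
  constructor
  · intro h
    exact ⟨y - x, z - x, by omega⟩
  · rintro ⟨a, b, rfl, rfl, rfl⟩
    simp

lemma antitone_of_isLowerSet (hLf : ∀ x y z, (x, y, z) ∈ L ↔ x ≤ f (y - x, z - x))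
    (hL : IsLowerSet L) : Antitone f := by
  intro u v huv
  have h := hL (show (f v, f v + u.1, f v + u.2) ≤ surfacePt f v by
    simpa [surfacePt, Prod.le_def] using huv) (surfacePt_mem hLf v)
  simpa [hLf] using h

lemma map_sub_one_one_le_of_isLowerSet (hLf : ∀ x y z, (x, y, z) ∈ L ↔ x ≤ f (y - x, z - x))
    (hL : IsLowerSet L) (v : ℤ × ℤ) : f (v - (1, 1)) ≤ f v + 1 := by
  set g := f (v - (1, 1))
  have h := hL (show (g - 1, g - 1 + v.1, g - 1 + v.2) ≤ surfacePt f (v - (1, 1)) by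
    simp only [surfacePt, Prod.fst_sub, Prod.snd_sub, Prod.le_def]; omega) (surfacePt_mem hLf _)
  simpa [hLf] using h

end SubgraphOfHeight

lemma choose_two_succ (n : ℕ) : (n + 1).choose 2 = n.choose 2 + n := by
  rw [Nat.choose_succ_succ', Nat.choose_one_right, add_comm]

lemma finite_setOf_add_le (K : ℕ) : {p : ℕ × ℕ | p.1 + p.2 ≤ K}.Finite :=
  (finite_Iic (K, K)).subset fun p (hp : p.1 + p.2 ≤ K) => show p.1 ≤ K ∧ p.2 ≤ K by omega

lemma ncard_setOf_add_le (K : ℕ) : {p : ℕ × ℕ | p.1 + p.2 ≤ K}.ncard = (K + 2).choose 2 := by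
  induction K with
  | zero =>
    rw [show {p : ℕ × ℕ | p.1 + p.2 ≤ 0} = {(0, 0)} by ext ⟨x, y⟩; simp]
    simp
  | succ K ih =>
    have hsplit : {p : ℕ × ℕ | p.1 + p.2 ≤ K + 1} =
        {p | p.1 + p.2 ≤ K} ∪ ↑(Finset.HasAntidiagonal.antidiagonal (K + 1)) := by
      ext ⟨x, y⟩
      simp only [mem_ofPred_eq, mem_union, Finset.mem_coe, Finset.HasAntidiagonal.mem_antidiagonal]
      omega
    rw [hsplit, ncard_union_eq ?_ (finite_setOf_add_le K) (Finset.finite_toSet _), ih,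
      ncard_coe_finset, Finset.Nat.card_antidiagonal, choose_two_succ (K + 2)]
    · rw [disjoint_left]
      rintro ⟨x, y⟩ hp hq
      simp only [mem_ofPred_eq, Finset.mem_coe, Finset.HasAntidiagonal.mem_antidiagonal] at hp hq
      omega

-- Offset so that its three sectors are copies of the triangles `{x + y ≤ Kᵢ}` of `ℕ²`.
def triangleRegion (K₀ K₁ K₂ : ℕ) : Set (ℤ × ℤ) :=
  {v | -(K₀ : ℤ) ≤ v.1 + v.2 ∧ 2 * v.1 - v.2 ≤ K₁ + 1 ∧ 2 * v.2 - v.1 ≤ K₂ + 2}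

lemma ncard_triangleRegion {K₀ K₁ K₂ : ℕ} (h₀₁ : K₀ ≤ K₁ + 1) (h₁₂ : K₁ ≤ K₂ + 1)
    (h₂₀ : K₂ ≤ K₀ + 1) :
    (triangleRegion K₀ K₁ K₂).ncard =
      (K₀ + 2).choose 2 + (K₁ + 2).choose 2 + (K₂ + 2).choose 2 := by
  set T : ℕ → Set (ℕ × ℕ) := fun K => {p | p.1 + p.2 ≤ K}
  have hT : ∀ K, (T K).Finite := finite_setOf_add_le
  -- parametrizations of the sectors where `max 0 (max v.1 v.2)` is `0`, `v.1` and `v.2`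
  set e₀ : ℕ × ℕ → ℤ × ℤ := fun p => (-p.1, -p.2)
  set e₁ : ℕ × ℕ → ℤ × ℤ := fun p => (p.1 + 1, p.1 + 1 - p.2)
  set e₂ : ℕ × ℕ → ℤ × ℤ := fun p => (p.1 - p.2, p.1 + 1)
  have he₀ : e₀.Injective := fun p q h => by simp only [e₀, Prod.ext_iff] at h ⊢; omega
  have he₁ : e₁.Injective := fun p q h => by simp only [e₁, Prod.ext_iff] at h ⊢; omega
  have he₂ : e₂.Injective := fun p q h => by simp only [e₂, Prod.ext_iff] at h ⊢; omega
  have hsplit : triangleRegion K₀ K₁ K₂ = (e₀ '' T K₀ ∪ e₁ '' T K₁) ∪ e₂ '' T K₂ := by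
    ext ⟨a, b⟩
    simp only [triangleRegion, T, e₀, e₁, e₂, mem_ofPred_eq, mem_union, mem_image, Prod.exists,
      Prod.mk.injEq]
    constructor
    · rintro ⟨h1, h2, h3⟩
      by_cases hb : b ≤ 0 ∧ a ≤ 0
      · exact Or.inl (Or.inl ⟨(-a).toNat, (-b).toNat, by omega, by omega, by omega⟩)
      by_cases hab : b ≤ a
      · exact Or.inl (Or.inr ⟨(a - 1).toNat, (a - b).toNat, by omega, by omega, by omega⟩)
      · exact Or.inr ⟨(b - 1).toNat, (b - 1 - a).toNat, by omega, by omega, by omega⟩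
    · rintro ((⟨x, y, hxy, rfl, rfl⟩ | ⟨x, y, hxy, rfl, rfl⟩) | ⟨x, y, hxy, rfl, rfl⟩) <;> omega
  have hd₀₁ : Disjoint (e₀ '' T K₀) (e₁ '' T K₁) := by
    rw [disjoint_left]
    rintro _ ⟨p, -, rfl⟩ ⟨q, -, hq⟩
    simp only [e₀, e₁, Prod.ext_iff] at hq
    omega
  have hd₂ : Disjoint (e₀ '' T K₀ ∪ e₁ '' T K₁) (e₂ '' T K₂) := by
    rw [disjoint_left]
    rintro _ (⟨p, -, rfl⟩ | ⟨p, -, rfl⟩) ⟨q, -, hq⟩ <;>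
      simp only [e₀, e₁, e₂, Prod.ext_iff] at hq <;> omega
  rw [hsplit, ncard_union_eq hd₂ (((hT _).image _).union ((hT _).image _)) ((hT _).image _),
    ncard_union_eq hd₀₁ ((hT _).image _) ((hT _).image _), ncard_image_of_injective _ he₀,
    ncard_image_of_injective _ he₁, ncard_image_of_injective _ he₂]
  simp only [T, ncard_setOf_add_le]

lemma mem_triangleRegion_iff_of_isCutoff {L : Set (ℤ × ℤ × ℤ)} {f : ℤ × ℤ → ℤ}
    (hLf : ∀ x y z, (x, y, z) ∈ L ↔ x ≤ f (y - x, z - x)) (hsub : L ⊆ Iic 0) {N : ℕ}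
    (hN : IsCutoff (InitConds L) N) (v : ℤ × ℤ) :
    -(N : ℤ) - 2 ≤ 3 * f v + v.1 + v.2 ↔ v ∈ triangleRegion (N + 2) (N + 1) N := by
  obtain ⟨a, b⟩ := v
  set m := max 0 (max a b)
  have hI := initConds_eq_range hLf
  have htop : f (a, b) + m ≤ 0 := by
    have h := hsub (surfacePt_mem hLf (a, b))
    simp only [surfacePt, mem_Iic, Prod.le_def, Prod.fst_zero, Prod.snd_zero] at h
    omega
  -- near the boundary of the region, `f` is the height `-m` of the full cone `Iic 0`
  have hflat₁ : a + b - 3 * m ≤ -N → f (a, b) = -m := by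
    intro h
    have hmem := hN.1 (-m) (-m + a) (-m + b) (by omega) (by omega) (by omega) (by omega) (by omega)
    rw [hI] at hmem
    obtain ⟨u, hu⟩ := hmem
    simp only [surfacePt, Prod.mk.injEq] at hu
    obtain ⟨rfl, rfl⟩ : u = (a, b) := Prod.ext (by omega) (by omega)
    omega
  have hflat₂ : 3 * f (a, b) + a + b ≤ -N - 3 → f (a, b) = -m := by
    intro h
    by_contra hne
    refine hN.2 (f (a, b)) (f (a, b) + a) (f (a, b) + b) (by omega) (by omega) ?_
    rw [hI]
    exact ⟨(a, b), rfl⟩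
  simp only [triangleRegion, mem_ofPred_eq]
  omega

lemma sep_initConds_eq_image_triangleRegion {L : Set (ℤ × ℤ × ℤ)} {f : ℤ × ℤ → ℤ}
    (hLf : ∀ x y z, (x, y, z) ∈ L ↔ x ≤ f (y - x, z - x)) (hsub : L ⊆ Iic 0) {N : ℕ}
    (hN : IsCutoff (InitConds L) N) :
    {p ∈ InitConds L | p.1 + p.2.1 + p.2.2 ≥ -(N : ℤ) - 2} =
      surfacePt f '' triangleRegion (N + 2) (N + 1) N := by
  ext p
  simp only [initConds_eq_range hLf]
  constructor
  · rintro ⟨⟨v, rfl⟩, hv⟩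
    refine ⟨v, (mem_triangleRegion_iff_of_isCutoff hLf hsub hN v).1 ?_, rfl⟩
    simp only [surfacePt] at hv
    linarith
  · rintro ⟨v, hv, rfl⟩
    refine ⟨⟨v, rfl⟩, ?_⟩
    have := (mem_triangleRegion_iff_of_isCutoff hLf hsub hN v).2 hv
    simp only [surfacePt]
    linarith

lemma lowerTriangle_subset_triangleRegion_iff (N : ℕ) (v : ℤ × ℤ) :
    lowerTriangle v ⊆ triangleRegion (N + 2) (N + 1) N ↔ v ∈ triangleRegion N N N := by
  obtain ⟨a, b⟩ := v
  simp only [lowerTriangle, insert_subset_iff, singleton_subset_iff, triangleRegion, mem_ofPred_eq,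
    Prod.mk_sub_mk]
  push_cast
  omega

lemma ordConnected_sep_initConds {L : Set (ℤ × ℤ × ℤ)} (hL : IsLowerSet L) (c : ℤ) :
    {p ∈ InitConds L | p.1 + p.2.1 + p.2.2 ≥ c}.OrdConnected := by
  have hc : IsUpperSet {p : ℤ × ℤ × ℤ | p.1 + p.2.1 + p.2.2 ≥ c} :=
    fun p q ⟨h1, h2, h3⟩ (hp : _ ≥ c) => show _ ≥ c by omega
  exact (ordConnected_initConds hL).inter hc.ordConnected

/-- rhombus counting lemma: `J = {p ∈ I : i+j+k ≥ -N-2}` has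
`3·C(N+3,2) + 1` points and contains exactly `3·C(N+2,2)` rhombi. -/
theorem stmt3 (L : Set (ℤ × ℤ × ℤ))
    (hlow : IsLowerSet3 L)
    (hsub : L ⊆ LowerCone (0, 0, 0))
    (hfin : (LowerCone (0, 0, 0) \ L).Finite)
    (N : ℕ) (hN : IsCutoff (InitConds L) N) :
    {p ∈ InitConds L | p.1 + p.2.1 + p.2.2 ≥ -(N : ℤ) - 2}.ncard
        = 3 * Nat.choose (N + 3) 2 + 1 ∧
    {R : Set (ℤ × ℤ × ℤ) | (∃ i j k : ℤ, R = rhombA i j k ∨ R = rhombB i j k ∨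
          R = rhombC i j k) ∧
        R ⊆ {p ∈ InitConds L | p.1 + p.2.1 + p.2.2 ≥ -(N : ℤ) - 2}}.ncard
      = 3 * Nat.choose (N + 2) 2 := by
  rw [isLowerSet3_iff] at hlow
  rw [show ((0, 0, 0) : ℤ × ℤ × ℤ) = 0 from rfl, lowerCone_eq_Iic] at hsub hfin
  have hLf := mem_iff_le_height hlow hsub hfin
  have hJ := sep_initConds_eq_image_triangleRegion hLf hsub hN
  have hJconn := ordConnected_sep_initConds hlow (-(N : ℤ) - 2)
  constructor
  · rw [hJ, ncard_image_of_injective _ (surfacePt_injective _),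
      ncard_triangleRegion le_rfl le_rfl (by omega)]
    simp only [choose_two_succ]
    omega
  · rw [ncard_rhombi_eq hJconn, ncard_rhombDiagonalPairs_eq (antitone_of_isLowerSet hLf hlow)
      (map_sub_one_one_le_of_isLowerSet hLf hlow) hJconn
      (hJ.trans_subset (image_subset_range _ _)), hJ]
    simp_rw [image_subset_image_iff (surfacePt_injective _),
      lowerTriangle_subset_triangleRegion_iff]
    rw [ofPred_mem_eq, ncard_triangleRegion (by omega) (by omega) (by omega)]
    ring
end

section
/- Let L ⊆ C(0,0,0) be a lower set with U = C(0,0,0) \ L finite, and U nonempty. Choose (i,j,k) ∈ U with i+j+k minimal, and let L' = L ∪ {(i,j,k)}. Then L' is again a lower set contained in C(0,0,0), and the corresponding set of initial conditions satisfies I' = (I ∪ {(i,j,k)}) \ {(i-1,j-1,k-1)}, where I = {(p,q,r) ∈ L : (p+1,q+1,r+1) ∉ L} and I' is defined analogously from L'. -/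
/-- the "cube pop": adding to `L` a point of `U = C(0,0,0) \ L` of minimal
coordinate sum yields again a lower set contained in `C(0,0,0)`, whose initial
conditions are `(I ∪ {(i,j,k)}) \ {(i-1,j-1,k-1)}`. -/
theorem stmt4 (L : Set (ℤ × ℤ × ℤ))
    (hlow : IsLowerSet3 L)
    (hsub : L ⊆ LowerCone (0, 0, 0))
    (hfin : (LowerCone (0, 0, 0) \ L).Finite)
    (i j k : ℤ)
    (hmem : (i, j, k) ∈ LowerCone (0, 0, 0) \ L)
    (hmin : ∀ q ∈ LowerCone (0, 0, 0) \ L, i + j + k ≤ q.1 + q.2.1 + q.2.2) :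
    IsLowerSet3 (L ∪ {(i, j, k)}) ∧
    (L ∪ {(i, j, k)}) ⊆ LowerCone (0, 0, 0) ∧
    InitConds (L ∪ {(i, j, k)}) =
      (InitConds L ∪ {(i, j, k)}) \ {(i - 1, j - 1, k - 1)} := by
  obtain ⟨⟨hi0, hj0, hk0⟩, hik⟩ := hmem
  -- every strict lower point of (i,j,k) is in L
  have key : ∀ q : ℤ × ℤ × ℤ, q.1 ≤ i → q.2.1 ≤ j → q.2.2 ≤ k →
      q ≠ (i, j, k) → q ∈ L := by
    rintro ⟨a, b, c⟩ ha hb hc hne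
    by_contra hqL
    have hq0 : (a, b, c) ∈ LowerCone (0, 0, 0) :=
      ⟨le_trans ha hi0, le_trans hb hj0, le_trans hc hk0⟩
    have := hmin (a, b, c) ⟨hq0, hqL⟩
    simp only at this ha hb hc
    have hai : a = i := by omega
    have hbj : b = j := by omega
    have hck : c = k := by omega
    exact hne (by simp [hai, hbj, hck])
  have hlow' : IsLowerSet3 (L ∪ {(i, j, k)}) := by
    rintro p (hp | hp) q hq
    · exact Or.inl (hlow p hp hq)
    · simp only [Set.mem_singleton_iff] at hp
      subst hp
      rcases eq_or_ne q (i, j, k) with h | h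
      · exact Or.inr h
      · exact Or.inl (key q hq.1 hq.2.1 hq.2.2 h)
  refine ⟨hlow', ?_, ?_⟩
  · rintro p (hp | hp)
    · exact hsub hp
    · simp only [Set.mem_singleton_iff] at hp
      subst hp
      exact ⟨hi0, hj0, hk0⟩
  · -- successor of (i,j,k) not in L'
    have hsucc : (i + 1, j + 1, k + 1) ∉ L ∪ {(i, j, k)} := by
      rintro (h | h)
      · exact hik (hlow _ h ⟨by simp, by simp, by simp⟩)
      · simp only [Set.mem_singleton_iff, Prod.mk.injEq] at h
        omega
    ext p
    obtain ⟨a, b, c⟩ := p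
    simp only [InitConds, Set.mem_setOf_eq, Set.mem_union, Set.mem_diff,
      Set.mem_singleton_iff, Prod.mk.injEq]
    constructor
    · rintro ⟨hp1 | hp1, hp2⟩
      · refine ⟨Or.inl ⟨hp1, fun h => hp2 (Or.inl h)⟩, ?_⟩
        rintro ⟨rfl, rfl, rfl⟩
        exact hp2 (Or.inr (by simp))
      · obtain ⟨rfl, rfl, rfl⟩ := hp1
        exact ⟨Or.inr ⟨rfl, rfl, rfl⟩, by rintro ⟨h, _, _⟩; omega⟩
    · rintro ⟨hp1 | ⟨rfl, rfl, rfl⟩, hne⟩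
      · refine ⟨Or.inl hp1.1, ?_⟩
        rintro (h | h)
        · exact hp1.2 h
        · exact hne ⟨by omega, by omega, by omega⟩
      · refine ⟨Or.inr ⟨rfl, rfl, rfl⟩, ?_⟩
        rintro (h | h)
        · exact hsucc (Or.inl h)
        · omega
end

section
/- Define f : Z^3 → Q(x) (rational functions in variables x_{i,j,k}) by f(i,j,k) = x_{i,j,k} for -1 ≤ i+j+k ≤ 1, and f(i,j,k) = (f(i-1,j,k)·f(i,j-1,k-1) + f(i,j-1,k)·f(i-1,j,k-1) + f(i,j,k-1)·f(i-1,j-1,k)) / f(i-1,j-1,k-1) for i+j+k > 1. When all initial variables x_{i,j,k} are set to 1, f(i,j,k) = 3^{⌊n²/4⌋} where n = i+j+k, for all n ≥ 1. -/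
lemma expoZ5 (n : ℤ) : n^2/4 + (n-3)^2/4 = 1 + (n-1)^2/4 + (n-2)^2/4 := by
  obtain ⟨t, rfl | rfl⟩ := Int.even_or_odd' n
  · have h1 : (2*t)^2 = (t^2)*4 := by ring
    have h2 : (2*t-3)^2 = 1 + (t^2-3*t+2)*4 := by ring
    have h3 : (2*t-1)^2 = 1 + (t^2-t)*4 := by ring
    have h4 : (2*t-2)^2 = (t^2-2*t+1)*4 := by ring
    rw [h1, h2, h3, h4, Int.mul_ediv_cancel _ (by norm_num),
      Int.add_mul_ediv_right _ _ (by norm_num : (4:ℤ) ≠ 0),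
      Int.add_mul_ediv_right _ _ (by norm_num : (4:ℤ) ≠ 0),
      Int.mul_ediv_cancel _ (by norm_num)]
    norm_num; ring
  · have h1 : (2*t+1)^2 = 1 + (t^2+t)*4 := by ring
    have h2 : (2*t+1-3)^2 = (t^2-2*t+1)*4 := by ring
    have h3 : (2*t+1-1)^2 = (t^2)*4 := by ring
    have h4 : (2*t+1-2)^2 = 1 + (t^2-t)*4 := by ring
    rw [h1, h2, h3, h4, Int.mul_ediv_cancel _ (by norm_num),
      Int.add_mul_ediv_right _ _ (by norm_num : (4:ℤ) ≠ 0),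
      Int.add_mul_ediv_right _ _ (by norm_num : (4:ℤ) ≠ 0),
      Int.mul_ediv_cancel _ (by norm_num)]
    norm_num; ring

lemma aux5 (f : ℤ × ℤ × ℤ → ℚ)
    (hinit : ∀ i j k : ℤ, -1 ≤ i + j + k → i + j + k ≤ 1 → f (i, j, k) = 1)
    (hrec : ∀ i j k : ℤ, 1 < i + j + k →
      f (i, j, k) =
        (f (i - 1, j, k) * f (i, j - 1, k - 1) + f (i, j - 1, k) * f (i - 1, j, k - 1) +
            f (i, j, k - 1) * f (i - 1, j - 1, k)) / f (i - 1, j - 1, k - 1)) :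
    ∀ m : ℕ, ∀ i j k : ℤ, i + j + k = (m : ℤ) →
      f (i, j, k) = 3 ^ ((((m : ℤ)) ^ 2 / 4).toNat) := by
  intro m
  induction m using Nat.strong_induction_on with
  | _ m ih =>
    intro i j k h
    match m with
    | 0 =>
      rw [hinit i j k (by omega) (by omega)]
      norm_num
    | 1 =>
      rw [hinit i j k (by omega) (by omega)]
      norm_num
    | 2 =>
      rw [hrec i j k (by omega),
        hinit (i-1) j k (by omega) (by omega),
        hinit i (j-1) (k-1) (by omega) (by omega),
        hinit i (j-1) k (by omega) (by omega),
        hinit (i-1) j (k-1) (by omega) (by omega),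
        hinit i j (k-1) (by omega) (by omega),
        hinit (i-1) (j-1) k (by omega) (by omega),
        hinit (i-1) (j-1) (k-1) (by omega) (by omega)]
      norm_num
    | (m+3) =>
      have ha := ih (m+2) (by omega)
      have hb := ih (m+1) (by omega)
      have hc := ih m (by omega)
      set a := ((((m:ℤ)+2)) ^ 2 / 4).toNat with hadef
      set b := ((((m:ℤ)+1)) ^ 2 / 4).toNat with hbdef
      set c := (((m:ℤ)) ^ 2 / 4).toNat with hcdef
      have ca : (((m+2:ℕ):ℤ)^2/4).toNat = a := by push_cast; rfl
      have cb : (((m+1:ℕ):ℤ)^2/4).toNat = b := by push_cast; rfl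
      have h1 : f (i-1, j, k) = 3 ^ a := by rw [ha (i-1) j k (by omega)]; rw [ca]
      have h2 : f (i, j-1, k-1) = 3 ^ b := by rw [hb i (j-1) (k-1) (by omega)]; rw [cb]
      have h3 : f (i, j-1, k) = 3 ^ a := by rw [ha i (j-1) k (by omega)]; rw [ca]
      have h4 : f (i-1, j, k-1) = 3 ^ b := by rw [hb (i-1) j (k-1) (by omega)]; rw [cb]
      have h5 : f (i, j, k-1) = 3 ^ a := by rw [ha i j (k-1) (by omega)]; rw [ca]
      have h6 : f (i-1, j-1, k) = 3 ^ b := by rw [hb (i-1) (j-1) k (by omega)]; rw [cb]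
      have h7 : f (i-1, j-1, k-1) = 3 ^ c := by rw [hc (i-1) (j-1) (k-1) (by omega)]
      set N := ((((m+3:ℕ):ℤ)) ^ 2 / 4).toNat with hNdef
      have hexp : a + b + 1 = N + c := by
        have hz := expoZ5 ((m:ℤ)+3)
        have e1 : ((m:ℤ)+3-1) = (m:ℤ)+2 := by ring
        have e2 : ((m:ℤ)+3-2) = (m:ℤ)+1 := by ring
        have e3 : ((m:ℤ)+3-3) = (m:ℤ) := by ring
        rw [e1, e2, e3] at hz
        have hN' : N = ((((m:ℤ)+3)) ^ 2 / 4).toNat := by rw [hNdef]; push_cast; rfl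
        have n1 : 0 ≤ ((m:ℤ)+3)^2/4 := Int.ediv_nonneg (by positivity) (by norm_num)
        have n2 : 0 ≤ ((m:ℤ)+2)^2/4 := Int.ediv_nonneg (by positivity) (by norm_num)
        have n3 : 0 ≤ ((m:ℤ)+1)^2/4 := Int.ediv_nonneg (by positivity) (by norm_num)
        have n4 : 0 ≤ ((m:ℤ))^2/4 := Int.ediv_nonneg (by positivity) (by norm_num)
        omega
      rw [hrec i j k (by omega), h1, h2, h3, h4, h5, h6, h7]
      have hcne : (3:ℚ)^c ≠ 0 := by positivity
      rw [div_eq_iff hcne]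
      have key : (3:ℚ)^a * 3^b * 3 = (3:ℚ)^N * 3^c := by
        rw [← pow_add, ← pow_succ, ← pow_add, hexp]
      linear_combination key

/-- for the cube recurrence with standard initial conditions and all
initial variables set to `1`, `f(i,j,k) = 3^⌊n²/4⌋` where `n = i+j+k ≥ 1`. -/
theorem stmt5 (f : ℤ × ℤ × ℤ → ℚ)
    (hinit : ∀ i j k : ℤ, -1 ≤ i + j + k → i + j + k ≤ 1 → f (i, j, k) = 1)
    (hrec : ∀ i j k : ℤ, 1 < i + j + k →
      f (i, j, k) =
        (f (i - 1, j, k) * f (i, j - 1, k - 1) + f (i, j - 1, k) * f (i - 1, j, k - 1) +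
            f (i, j, k - 1) * f (i - 1, j - 1, k)) / f (i - 1, j - 1, k - 1)) :
    ∀ i j k : ℤ, 1 ≤ i + j + k →
      f (i, j, k) = 3 ^ (((i + j + k) ^ 2 / 4).toNat) := by
  intro i j k h
  obtain ⟨m, hm⟩ : ∃ m : ℕ, i + j + k = (m : ℤ) := ⟨(i + j + k).toNat, by omega⟩
  rw [hm]
  exact aux5 f hinit hrec m i j k hm
end

section
/- In Z^3, define the three rhombus types r_a(i,j,k) = {(i,j,k),(i,j-1,k),(i,j,k-1),(i,j-1,k-1)}, r_b and r_c analogously. Let I be a set of initial conditions (I = {(i,j,k) ∈ L : (i+1,j+1,k+1) ∉ L} for a lower set L ⊆ C(0,0,0) with finite complement in C(0,0,0)). Then no two distinct rhombi of type a contained in I share the same pair of indices (j,k): if r_a(i,j,k) ⊆ I and r_a(i',j,k) ⊆ I then i = i'. -/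
/-- two type-`a` rhombi contained in the initial conditions `I`
cannot share the same pair of indices `(j,k)`. -/
theorem stmt10 (L : Set (ℤ × ℤ × ℤ))
    (hlow : IsLowerSet3 L)
    (hsub : L ⊆ LowerCone (0, 0, 0))
    (hfin : (LowerCone (0, 0, 0) \ L).Finite)
    (i i' j k : ℤ)
    (h1 : rhombA i j k ⊆ InitConds L)
    (h2 : rhombA i' j k ⊆ InitConds L) :
    i = i' := by
  have key : ∀ a b : ℤ, a < b → rhombA a j k ⊆ InitConds L →
      rhombA b j k ⊆ InitConds L → False := by
    intro a b hab ha hb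
    have hA : (a, j - 1, k - 1) ∈ InitConds L := ha (by simp [rhombA])
    have hB : (b, j, k) ∈ InitConds L := hb (by simp [rhombA])
    exact hA.2 (hlow _ hB.1 (by simp only [LowerCone, Set.mem_setOf_eq]; omega))
  by_contra hne
  rcases lt_or_gt_of_ne hne with h | h
  · exact key i i' h h1 h2
  · exact key i' i h h2 h1
end

section
/- Let R be the field of rational functions over Q in the indeterminate t. Suppose a family f(i,j,k) of nonzero elements of R indexed by points of C(0,0,0) satisfies: f(i,j,k) is a polynomial in t² with positive constant term for initial points, and the recurrence f(i,j,k)·f(i-1,j-1,k-1) = f(i-1,j,k)·f(i,j-1,k-1) + f(i,j-1,k)·f(i-1,j,k-1) + t²·f(i,j,k-1)·f(i-1,j-1,k) for non-initial points. If additionally each f(i,j,k) is known a priori to be a Laurent polynomial in t with nonnegative coefficients, then each f(i,j,k) is a polynomial in t² with positive constant term. -/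
/-- `r ∈ ℚ(t)` is a polynomial in `t²` with positive constant term. -/
def IsPolyT2PosConst (r : RatFunc ℚ) : Prop :=
  ∃ P : Polynomial ℚ, 0 < P.coeff 0 ∧
    r = algebraMap (Polynomial ℚ) (RatFunc ℚ) (P.comp (Polynomial.X ^ 2))

/-- `r ∈ ℚ(t)` is a Laurent polynomial in `t` with nonnegative coefficients,
i.e. `r · t^m` is a polynomial with nonnegative coefficients for some `m`. -/
def IsLaurentNonneg (r : RatFunc ℚ) : Prop :=
  ∃ (Q : Polynomial ℚ) (m : ℕ), (∀ n, 0 ≤ Q.coeff n) ∧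
    r * algebraMap (Polynomial ℚ) (RatFunc ℚ) (Polynomial.X ^ m) =
      algebraMap (Polynomial ℚ) (RatFunc ℚ) Q

open Polynomial

lemma coeff_comp_neg_X (P : ℚ[X]) (n : ℕ) :
    (P.comp (-X)).coeff n = (-1)^n * P.coeff n := by
  induction P using Polynomial.induction_on' with
  | add p q hp hq => simp [add_comp, hp, hq, mul_add]
  | monomial k a =>
    rw [monomial_comp, neg_pow,
      show (C a * ((-1:ℚ[X])^k * X^k)) = C (a * (-1)^k) * X^k by
        rw [map_mul, map_pow, map_neg, map_one]; ring]
    rw [coeff_C_mul, coeff_X_pow, coeff_monomial]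
    rcases eq_or_ne k n with rfl | hkn
    · simp; ring
    · simp [hkn, Ne.symm hkn]

lemma exists_comp_sq (P : ℚ[X]) (h : ∀ n, Odd n → P.coeff n = 0) :
    ∃ Q : ℚ[X], Q.coeff 0 = P.coeff 0 ∧ P = Q.comp (X^2) := by
  refine ⟨∑ n ∈ Finset.range (P.natDegree + 1), monomial n (P.coeff (2*n)), ?_, ?_⟩
  · rw [finset_sum_coeff]
    simp only [coeff_monomial]
    rw [Finset.sum_ite_eq' (Finset.range (P.natDegree + 1)) 0]
    simp
  · ext k
    rw [Polynomial.sum_comp, finset_sum_coeff]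
    simp only [monomial_comp, ← pow_mul, coeff_C_mul, coeff_X_pow, mul_ite, mul_one, mul_zero]
    rcases Nat.even_or_odd k with ⟨m, hm⟩ | hk
    · subst hm
      rw [Finset.sum_congr rfl (g := fun x => if x = m then P.coeff (2*x) else 0)
        (fun x _ => by
          rcases eq_or_ne x m with rfl | hxm
          · rw [if_pos (by ring)]; simp
          · rw [if_neg (by omega)]; simp [hxm])]
      rw [Finset.sum_ite_eq' (Finset.range (P.natDegree + 1)) m]
      by_cases hm : m ∈ Finset.range (P.natDegree + 1)
      · rw [if_pos hm]; congr 1; omega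
      · rw [if_neg hm]
        apply coeff_eq_zero_of_natDegree_lt
        simp at hm; omega
    · obtain ⟨m, rfl⟩ := hk
      rw [h _ ⟨m, rfl⟩]
      symm
      apply Finset.sum_eq_zero
      intro x _
      rw [if_neg (by omega)]

lemma pt2_mul {r s : RatFunc ℚ} (hr : IsPolyT2PosConst r) (hs : IsPolyT2PosConst s) :
    IsPolyT2PosConst (r * s) := by
  obtain ⟨P, hP, rfl⟩ := hr
  obtain ⟨Q, hQ, rfl⟩ := hs
  exact ⟨P * Q, by rw [mul_coeff_zero]; positivity, by rw [mul_comp, map_mul]⟩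

lemma pt2_add {r s : RatFunc ℚ} (hr : IsPolyT2PosConst r) (hs : IsPolyT2PosConst s) :
    IsPolyT2PosConst (r + s) := by
  obtain ⟨P, hP, rfl⟩ := hr
  obtain ⟨Q, hQ, rfl⟩ := hs
  exact ⟨P + Q, by rw [coeff_add]; positivity, by rw [add_comp, map_add]⟩

lemma key_lemma (r A B C : RatFunc ℚ) (hr : IsLaurentNonneg r)
    (hA : IsPolyT2PosConst A) (hB : IsPolyT2PosConst B) (hC : IsPolyT2PosConst C)
    (heq : r * C = A + RatFunc.X ^ 2 * B) : IsPolyT2PosConst r := by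
  obtain ⟨Q, m, -, hQ⟩ := hr
  obtain ⟨PA, hA0, rfl⟩ := hA
  obtain ⟨PB, hB0, rfl⟩ := hB
  obtain ⟨PC, hC0, rfl⟩ := hC
  set alg := algebraMap (Polynomial ℚ) (RatFunc ℚ)
  set D : ℚ[X] := PA.comp (X^2) + X^2 * PB.comp (X^2) with hD
  have heq' : r * alg (PC.comp (X^2)) = alg D := by
    rw [heq, hD, map_add, map_mul, map_pow, RatFunc.algebraMap_X]
  have hpoly : Q * PC.comp (X^2) = D * X^m := by
    apply RatFunc.algebraMap_injective ℚ
    rw [map_mul, map_mul, ← hQ,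
      show r * alg (X^m) * alg (PC.comp (X^2)) = r * alg (PC.comp (X^2)) * alg (X^m) from by
        ring, heq']
  have hCc0 : (PC.comp (X^2)).coeff 0 = PC.coeff 0 := by
    simp [coeff_zero_eq_eval_zero, eval_comp]
  have hCcne : (PC.comp (X^2)) ≠ 0 := fun hzero => by
    rw [hzero, coeff_zero] at hCc0; linarith
  have hXdvd : (X : ℚ[X])^m ∣ Q := by
    have hprime : Prime (X : ℚ[X]) := Polynomial.prime_X
    refine hprime.pow_dvd_of_dvd_mul_right (a := Q) (b := PC.comp (X^2)) m ?_ ?_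
    · rw [X_dvd_iff, hCc0]; exact ne_of_gt hC0
    · exact ⟨D, by linear_combination hpoly⟩
  obtain ⟨P, hP⟩ := hXdvd
  have hXne : alg (X^m : ℚ[X]) ≠ 0 :=
    RatFunc.algebraMap_ne_zero (pow_ne_zero m X_ne_zero)
  have hrP : r = alg P := by
    apply mul_right_cancel₀ hXne
    rw [hQ, hP, map_mul]; ring
  have hPC : P * PC.comp (X^2) = D := by
    apply mul_left_cancel₀ (pow_ne_zero m (X_ne_zero : (X:ℚ[X]) ≠ 0))
    rw [show (X:ℚ[X])^m * (P * PC.comp (X^2)) = (X^m * P) * PC.comp (X^2) from by ring,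
      ← hP, hpoly]; ring
  have hCcomp : (PC.comp (X^2)).comp (-X) = PC.comp (X^2) := by
    rw [comp_assoc]; congr 1; simp
  have hDcomp : D.comp (-X) = D := by
    rw [hD]
    simp only [add_comp, mul_comp, pow_comp, X_comp, comp_assoc]
    simp
  have heven : P.comp (-X) = P := by
    apply mul_right_cancel₀ hCcne
    rw [hPC]
    have := congrArg (fun q : ℚ[X] => q.comp (-X)) hPC
    simpa only [mul_comp, hCcomp, hDcomp] using this
  have hodd : ∀ n, Odd n → P.coeff n = 0 := by
    intro n hn
    have := congrArg (fun q : ℚ[X] => q.coeff n) heven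
    simp only [coeff_comp_neg_X, hn.neg_one_pow] at this
    linarith
  obtain ⟨P₂, hP₂0, hP₂⟩ := exists_comp_sq P hodd
  have hD0 : D.coeff 0 = PA.coeff 0 := by
    rw [hD, coeff_add, mul_coeff_zero]
    simp [coeff_zero_eq_eval_zero, eval_comp]
  have h0 : P.coeff 0 * PC.coeff 0 = PA.coeff 0 := by
    have := congrArg (fun q : ℚ[X] => q.coeff 0) hPC
    simpa only [mul_coeff_zero, hCc0, hD0] using this
  have hpos : 0 < P.coeff 0 := by nlinarith
  exact ⟨P₂, by rw [hP₂0]; exact hpos, by rw [hrP, hP₂]⟩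

/-- induction step of Theorem 4 of Carroll–Speyer: a family of
nonzero elements of `ℚ(t)` indexed by `C(0,0,0)` that is a polynomial in `t²`
with positive constant term at initial points, satisfies the specialized cube
recurrence at non-initial points, and is everywhere a Laurent polynomial in `t`
with nonnegative coefficients, is in fact everywhere a polynomial in `t²` with
positive constant term. -/
theorem stmt12 (L : Set (ℤ × ℤ × ℤ))
    (hlow : IsLowerSet3 L)
    (hsub : L ⊆ LowerCone (0, 0, 0))
    (hfin : (LowerCone (0, 0, 0) \ L).Finite)
    (f : ℤ × ℤ × ℤ → RatFunc ℚ)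
    (hne : ∀ p ∈ InitConds L ∪ (LowerCone (0, 0, 0) \ L), f p ≠ 0)
    (hinit : ∀ p ∈ InitConds L, IsPolyT2PosConst (f p))
    (hrec : ∀ i j k : ℤ, (i, j, k) ∈ LowerCone (0, 0, 0) \ L →
      f (i, j, k) * f (i - 1, j - 1, k - 1) =
        f (i - 1, j, k) * f (i, j - 1, k - 1) + f (i, j - 1, k) * f (i - 1, j, k - 1) +
          RatFunc.X ^ 2 * (f (i, j, k - 1) * f (i - 1, j - 1, k)))
    (hlaurent : ∀ p ∈ InitConds L ∪ (LowerCone (0, 0, 0) \ L), IsLaurentNonneg (f p)) :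
    ∀ p ∈ InitConds L ∪ (LowerCone (0, 0, 0) \ L), IsPolyT2PosConst (f p) := by
  suffices H : ∀ n : ℕ, ∀ i j k : ℤ, (i, j, k) ∈ LowerCone (0, 0, 0) \ L →
      (LowerCone (i, j, k) ∩ (LowerCone (0, 0, 0) \ L)).ncard = n →
      IsPolyT2PosConst (f (i, j, k)) by
    rintro ⟨i, j, k⟩ (hp | hp)
    · exact hinit _ hp
    · exact H _ i j k hp rfl
  intro n
  induction n using Nat.strong_induction_on with
  | _ n IH =>
  intro i j k hp hn
  have hp0 : (i, j, k) ∈ LowerCone (0, 0, 0) := hp.1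
  have corner : ∀ a b c : ℤ, a ≤ i → b ≤ j → c ≤ k → i ≤ a + 1 → j ≤ b + 1 → k ≤ c + 1 →
      (a, b, c) ≠ (i, j, k) → IsPolyT2PosConst (f (a, b, c)) := by
    intro a b c h1 h2 h3 h4 h5 h6 hne'
    have hq0 : (a, b, c) ∈ LowerCone (0, 0, 0) :=
      ⟨le_trans h1 hp0.1, le_trans h2 hp0.2.1, le_trans h3 hp0.2.2⟩
    by_cases hqL : (a, b, c) ∈ L
    · exact hinit _ ⟨hqL, fun hcon => hp.2 (hlow _ hcon ⟨h4, h5, h6⟩)⟩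
    · have hqS : (a, b, c) ∈ LowerCone (0, 0, 0) \ L := ⟨hq0, hqL⟩
      have hsubcone : LowerCone (a, b, c) ∩ (LowerCone (0, 0, 0) \ L) ⊆
          LowerCone (i, j, k) ∩ (LowerCone (0, 0, 0) \ L) := by
        rintro r ⟨hr, hrS⟩
        exact ⟨⟨le_trans hr.1 h1, le_trans hr.2.1 h2, le_trans hr.2.2 h3⟩, hrS⟩
      have hnotmem : (i, j, k) ∉ LowerCone (a, b, c) := by
        intro hcon
        apply hne'
        have e1 : a = i := le_antisymm h1 hcon.1
        have e2 : b = j := le_antisymm h2 hcon.2.1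
        have e3 : c = k := le_antisymm h3 hcon.2.2
        rw [e1, e2, e3]
      have hlt : (LowerCone (a, b, c) ∩ (LowerCone (0, 0, 0) \ L)).ncard < n := by
        rw [← hn]
        exact Set.ncard_lt_ncard
          ⟨hsubcone, fun hsup => hnotmem (hsup ⟨⟨le_refl i, le_refl j, le_refl k⟩, hp⟩).1⟩
          (hfin.subset Set.inter_subset_right)
      exact IH _ hlt a b c hqS rfl
  have c011 := corner (i-1) j k (by omega) (by omega) (by omega) (by omega) (by omega) (by omega)
    (by simp only [ne_eq, Prod.mk.injEq]; omega)
  have c101 := corner i (j-1) k (by omega) (by omega) (by omega) (by omega) (by omega) (by omega)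
    (by simp only [ne_eq, Prod.mk.injEq]; omega)
  have c110 := corner i j (k-1) (by omega) (by omega) (by omega) (by omega) (by omega) (by omega)
    (by simp only [ne_eq, Prod.mk.injEq]; omega)
  have c001 := corner (i-1) (j-1) k (by omega) (by omega) (by omega) (by omega) (by omega)
    (by omega) (by simp only [ne_eq, Prod.mk.injEq]; omega)
  have c010 := corner (i-1) j (k-1) (by omega) (by omega) (by omega) (by omega) (by omega)
    (by omega) (by simp only [ne_eq, Prod.mk.injEq]; omega)
  have c100 := corner i (j-1) (k-1) (by omega) (by omega) (by omega) (by omega) (by omega)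
    (by omega) (by simp only [ne_eq, Prod.mk.injEq]; omega)
  have c000 := corner (i-1) (j-1) (k-1) (by omega) (by omega) (by omega) (by omega) (by omega)
    (by omega) (by simp only [ne_eq, Prod.mk.injEq]; omega)
  exact key_lemma (f (i, j, k)) _ _ _ (hlaurent _ (Or.inr hp))
    (pt2_add (pt2_mul c011 c100) (pt2_mul c101 c010))
    (pt2_mul c110 c001) c000 (hrec i j k hp)
end

section
/- Let I be initial conditions for the cube recurrence (I = {(i,j,k) ∈ L : (i+1,j+1,k+1) ∉ L} for a lower set L ⊆ C(0,0,0) with C(0,0,0) \ L finite). For any (i,j,k) ∈ I, among the twelve candidate neighbors (i±1, j±1, k), (i±1, j, k±1), (i, j±1, k±1), the pairs {(i+1,j,k+1),(i+1,j-1,k)}, {(i,j-1,k-1),(i+1,j,k-1)}, {(i+1,j+1,k),(i,j+1,k-1)}, {(i-1,j,k-1),(i-1,j+1,k)}, {(i,j+1,k+1),(i-1,j,k+1)}, {(i-1,j-1,k),(i,j-1,k+1)} each contain at most one point of I adjacent to (i,j,k) via a rhombus edge; hence (i,j,k) has at most 6 neighbors in the graph of all rhombus edges. -/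
/-- `p` and `q` are joined by a (long or short) edge of some rhombus contained in `I`. -/
def RhombAdj (I : Set (ℤ × ℤ × ℤ)) (p q : ℤ × ℤ × ℤ) : Prop :=
  ∃ i j k : ℤ,
    (rhombA i j k ⊆ I ∧
      (({p, q} : Set (ℤ × ℤ × ℤ)) = {(i, j - 1, k), (i, j, k - 1)} ∨
        ({p, q} : Set (ℤ × ℤ × ℤ)) = {(i, j, k), (i, j - 1, k - 1)})) ∨
    (rhombB i j k ⊆ I ∧
      (({p, q} : Set (ℤ × ℤ × ℤ)) = {(i - 1, j, k), (i, j, k - 1)} ∨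
        ({p, q} : Set (ℤ × ℤ × ℤ)) = {(i, j, k), (i - 1, j, k - 1)})) ∨
    (rhombC i j k ⊆ I ∧
      (({p, q} : Set (ℤ × ℤ × ℤ)) = {(i - 1, j, k), (i, j - 1, k)} ∨
        ({p, q} : Set (ℤ × ℤ × ℤ)) = {(i, j, k), (i - 1, j - 1, k)}))

/-- Both endpoints of a rhombus edge lie in `I`. -/
lemma CS_adj_snd_mem {I : Set (ℤ × ℤ × ℤ)} {p q : ℤ × ℤ × ℤ} (h : RhombAdj I p q) : q ∈ I := by
  obtain ⟨a, b, c, h⟩ := h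
  rcases h with ⟨hs, h | h⟩ | ⟨hs, h | h⟩ | ⟨hs, h | h⟩ <;>
  · have hq : q ∈ ({p, q} : Set (ℤ × ℤ × ℤ)) := by simp
    rw [h] at hq
    simp only [Set.mem_insert_iff, Set.mem_singleton_iff] at hq
    rcases hq with rfl | rfl <;> apply hs <;> simp [rhombA, rhombB, rhombC]

/-- A rhombus neighbor of `(i,j,k)` is one of twelve candidate points. -/
lemma CS_adj_target {I : Set (ℤ × ℤ × ℤ)} {i j k : ℤ} {q : ℤ × ℤ × ℤ}
    (h : RhombAdj I (i, j, k) q) :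
    q ∈ ({(i + 1, j, k + 1), (i + 1, j - 1, k), (i, j - 1, k - 1), (i + 1, j, k - 1),
      (i + 1, j + 1, k), (i, j + 1, k - 1), (i - 1, j, k - 1), (i - 1, j + 1, k),
      (i, j + 1, k + 1), (i - 1, j, k + 1), (i - 1, j - 1, k), (i, j - 1, k + 1)} :
        Set (ℤ × ℤ × ℤ)) := by
  obtain ⟨q1, q2, q3⟩ := q
  obtain ⟨a, b, c, h⟩ := h
  simp only [Set.pair_eq_pair_iff, Prod.mk.injEq] at h
  simp only [Set.mem_insert_iff, Set.mem_singleton_iff, Prod.mk.injEq]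
  rcases h with ⟨hs,(⟨⟨e1,e2,e3⟩,f1,f2,f3⟩|⟨⟨e1,e2,e3⟩,f1,f2,f3⟩)|(⟨⟨e1,e2,e3⟩,f1,f2,f3⟩|⟨⟨e1,e2,e3⟩,f1,f2,f3⟩)⟩|⟨hs,(⟨⟨e1,e2,e3⟩,f1,f2,f3⟩|⟨⟨e1,e2,e3⟩,f1,f2,f3⟩)|(⟨⟨e1,e2,e3⟩,f1,f2,f3⟩|⟨⟨e1,e2,e3⟩,f1,f2,f3⟩)⟩|⟨hs,(⟨⟨e1,e2,e3⟩,f1,f2,f3⟩|⟨⟨e1,e2,e3⟩,f1,f2,f3⟩)|(⟨⟨e1,e2,e3⟩,f1,f2,f3⟩|⟨⟨e1,e2,e3⟩,f1,f2,f3⟩)⟩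
  · exact (.inr (.inr (.inr (.inr (.inr (.inl ⟨by omega, by omega, by omega⟩))))))
  · exact (.inr (.inr (.inr (.inr (.inr (.inr (.inr (.inr (.inr (.inr (.inr ⟨by omega, by omega, by omega⟩)))))))))))
  · exact (.inr (.inr (.inl ⟨by omega, by omega, by omega⟩)))
  · exact (.inr (.inr (.inr (.inr (.inr (.inr (.inr (.inr (.inl ⟨by omega, by omega, by omega⟩)))))))))
  · exact (.inr (.inr (.inr (.inl ⟨by omega, by omega, by omega⟩))))
  · exact (.inr (.inr (.inr (.inr (.inr (.inr (.inr (.inr (.inr (.inl ⟨by omega, by omega, by omega⟩))))))))))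
  · exact (.inr (.inr (.inr (.inr (.inr (.inr (.inl ⟨by omega, by omega, by omega⟩)))))))
  · exact (.inl ⟨by omega, by omega, by omega⟩)
  · exact (.inr (.inl ⟨by omega, by omega, by omega⟩))
  · exact (.inr (.inr (.inr (.inr (.inr (.inr (.inr (.inl ⟨by omega, by omega, by omega⟩))))))))
  · exact (.inr (.inr (.inr (.inr (.inr (.inr (.inr (.inr (.inr (.inr (.inl ⟨by omega, by omega, by omega⟩)))))))))))
  · exact (.inr (.inr (.inr (.inr (.inl ⟨by omega, by omega, by omega⟩)))))

section Extra
variable {I : Set (ℤ × ℤ × ℤ)} {i j k : ℤ}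

lemma CS_extra1 (h : RhombAdj I (i, j, k) (i + 1, j - 1, k)) : (i, j - 1, k) ∈ I := by
  obtain ⟨a, b, c, h⟩ := h
  simp only [Set.pair_eq_pair_iff, Prod.mk.injEq] at h
  rcases h with ⟨hs, ⟨⟨h1,h2,h3⟩,h4,h5,h6⟩|⟨⟨h1,h2,h3⟩,h4,h5,h6⟩⟩ |
      ⟨hs, ⟨⟨h1,h2,h3⟩,h4,h5,h6⟩|⟨⟨h1,h2,h3⟩,h4,h5,h6⟩⟩ |
      ⟨hs, ⟨⟨h1,h2,h3⟩,h4,h5,h6⟩|⟨⟨h1,h2,h3⟩,h4,h5,h6⟩⟩ <;>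
    first
      | omega
      | (apply hs; simp only [rhombA, rhombB, rhombC, Set.mem_insert_iff,
          Set.mem_singleton_iff, Prod.mk.injEq]; omega)

lemma CS_extra2 (h : RhombAdj I (i, j, k) (i + 1, j, k - 1)) : (i + 1, j, k) ∈ I := by
  obtain ⟨a, b, c, h⟩ := h
  simp only [Set.pair_eq_pair_iff, Prod.mk.injEq] at h
  rcases h with ⟨hs, ⟨⟨h1,h2,h3⟩,h4,h5,h6⟩|⟨⟨h1,h2,h3⟩,h4,h5,h6⟩⟩ |
      ⟨hs, ⟨⟨h1,h2,h3⟩,h4,h5,h6⟩|⟨⟨h1,h2,h3⟩,h4,h5,h6⟩⟩ |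
      ⟨hs, ⟨⟨h1,h2,h3⟩,h4,h5,h6⟩|⟨⟨h1,h2,h3⟩,h4,h5,h6⟩⟩ <;>
    first
      | omega
      | (apply hs; simp only [rhombA, rhombB, rhombC, Set.mem_insert_iff,
          Set.mem_singleton_iff, Prod.mk.injEq]; omega)

lemma CS_extra3 (h : RhombAdj I (i, j, k) (i, j + 1, k - 1)) : (i, j, k - 1) ∈ I := by
  obtain ⟨a, b, c, h⟩ := h
  simp only [Set.pair_eq_pair_iff, Prod.mk.injEq] at h
  rcases h with ⟨hs, ⟨⟨h1,h2,h3⟩,h4,h5,h6⟩|⟨⟨h1,h2,h3⟩,h4,h5,h6⟩⟩ |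
      ⟨hs, ⟨⟨h1,h2,h3⟩,h4,h5,h6⟩|⟨⟨h1,h2,h3⟩,h4,h5,h6⟩⟩ |
      ⟨hs, ⟨⟨h1,h2,h3⟩,h4,h5,h6⟩|⟨⟨h1,h2,h3⟩,h4,h5,h6⟩⟩ <;>
    first
      | omega
      | (apply hs; simp only [rhombA, rhombB, rhombC, Set.mem_insert_iff,
          Set.mem_singleton_iff, Prod.mk.injEq]; omega)

lemma CS_extra4 (h : RhombAdj I (i, j, k) (i - 1, j + 1, k)) : (i, j + 1, k) ∈ I := by
  obtain ⟨a, b, c, h⟩ := h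
  simp only [Set.pair_eq_pair_iff, Prod.mk.injEq] at h
  rcases h with ⟨hs, ⟨⟨h1,h2,h3⟩,h4,h5,h6⟩|⟨⟨h1,h2,h3⟩,h4,h5,h6⟩⟩ |
      ⟨hs, ⟨⟨h1,h2,h3⟩,h4,h5,h6⟩|⟨⟨h1,h2,h3⟩,h4,h5,h6⟩⟩ |
      ⟨hs, ⟨⟨h1,h2,h3⟩,h4,h5,h6⟩|⟨⟨h1,h2,h3⟩,h4,h5,h6⟩⟩ <;>
    first
      | omega
      | (apply hs; simp only [rhombA, rhombB, rhombC, Set.mem_insert_iff,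
          Set.mem_singleton_iff, Prod.mk.injEq]; omega)

lemma CS_extra5 (h : RhombAdj I (i, j, k) (i - 1, j, k + 1)) : (i - 1, j, k) ∈ I := by
  obtain ⟨a, b, c, h⟩ := h
  simp only [Set.pair_eq_pair_iff, Prod.mk.injEq] at h
  rcases h with ⟨hs, ⟨⟨h1,h2,h3⟩,h4,h5,h6⟩|⟨⟨h1,h2,h3⟩,h4,h5,h6⟩⟩ |
      ⟨hs, ⟨⟨h1,h2,h3⟩,h4,h5,h6⟩|⟨⟨h1,h2,h3⟩,h4,h5,h6⟩⟩ |
      ⟨hs, ⟨⟨h1,h2,h3⟩,h4,h5,h6⟩|⟨⟨h1,h2,h3⟩,h4,h5,h6⟩⟩ <;>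
    first
      | omega
      | (apply hs; simp only [rhombA, rhombB, rhombC, Set.mem_insert_iff,
          Set.mem_singleton_iff, Prod.mk.injEq]; omega)

lemma CS_extra6 (h : RhombAdj I (i, j, k) (i, j - 1, k + 1)) : (i, j, k + 1) ∈ I := by
  obtain ⟨a, b, c, h⟩ := h
  simp only [Set.pair_eq_pair_iff, Prod.mk.injEq] at h
  rcases h with ⟨hs, ⟨⟨h1,h2,h3⟩,h4,h5,h6⟩|⟨⟨h1,h2,h3⟩,h4,h5,h6⟩⟩ |
      ⟨hs, ⟨⟨h1,h2,h3⟩,h4,h5,h6⟩|⟨⟨h1,h2,h3⟩,h4,h5,h6⟩⟩ |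
      ⟨hs, ⟨⟨h1,h2,h3⟩,h4,h5,h6⟩|⟨⟨h1,h2,h3⟩,h4,h5,h6⟩⟩ <;>
    first
      | omega
      | (apply hs; simp only [rhombA, rhombB, rhombC, Set.mem_insert_iff,
          Set.mem_singleton_iff, Prod.mk.injEq]; omega)

end Extra

/-- Two points of `InitConds L` cannot differ by `(1,1,1)`. -/
lemma CS_no_diag {L : Set (ℤ × ℤ × ℤ)} {a b c : ℤ}
    (h1 : (a, b, c) ∈ InitConds L) (h2 : (a + 1, b + 1, c + 1) ∈ InitConds L) : False :=
  h1.2 h2.1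

lemma CS_pair_bd {α : Type*} (N : Set α) (x y : α) (h : ¬(x ∈ N ∧ y ∈ N)) :
    (N ∩ {x, y}).ncard ≤ 1 := by
  by_cases hx : x ∈ N
  · have hy : y ∉ N := fun hy => h ⟨hx, hy⟩
    have hsub : N ∩ {x, y} ⊆ {x} := by
      rintro z ⟨hz, hz'⟩
      simp only [Set.mem_insert_iff, Set.mem_singleton_iff] at hz' ⊢
      rcases hz' with rfl | rfl
      · rfl
      · exact absurd hz hy
    calc (N ∩ {x, y}).ncard ≤ ({x} : Set α).ncard :=
          Set.ncard_le_ncard hsub (Set.finite_singleton x)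
      _ = 1 := Set.ncard_singleton x
  · have hsub : N ∩ {x, y} ⊆ {y} := by
      rintro z ⟨hz, hz'⟩
      simp only [Set.mem_insert_iff, Set.mem_singleton_iff] at hz' ⊢
      rcases hz' with rfl | rfl
      · exact absurd hz hx
      · rfl
    calc (N ∩ {x, y}).ncard ≤ ({y} : Set α).ncard :=
          Set.ncard_le_ncard hsub (Set.finite_singleton y)
      _ = 1 := Set.ncard_singleton y

/-- Table 1 of Carroll–Speyer: of each of the six listed pairs of
candidate neighbors of a point `(i,j,k) ∈ I`, at most one member is adjacent to
`(i,j,k)` in the graph of rhombus edges; hence `(i,j,k)` has at most `6` neighbors. -/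
theorem stmt16 (L : Set (ℤ × ℤ × ℤ))
    (hlow : IsLowerSet3 L)
    (hsub : L ⊆ LowerCone (0, 0, 0))
    (hfin : (LowerCone (0, 0, 0) \ L).Finite)
    (i j k : ℤ) (hmem : (i, j, k) ∈ InitConds L) :
    (¬ (RhombAdj (InitConds L) (i, j, k) (i + 1, j, k + 1) ∧
        RhombAdj (InitConds L) (i, j, k) (i + 1, j - 1, k))) ∧
    (¬ (RhombAdj (InitConds L) (i, j, k) (i, j - 1, k - 1) ∧
        RhombAdj (InitConds L) (i, j, k) (i + 1, j, k - 1))) ∧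
    (¬ (RhombAdj (InitConds L) (i, j, k) (i + 1, j + 1, k) ∧
        RhombAdj (InitConds L) (i, j, k) (i, j + 1, k - 1))) ∧
    (¬ (RhombAdj (InitConds L) (i, j, k) (i - 1, j, k - 1) ∧
        RhombAdj (InitConds L) (i, j, k) (i - 1, j + 1, k))) ∧
    (¬ (RhombAdj (InitConds L) (i, j, k) (i, j + 1, k + 1) ∧
        RhombAdj (InitConds L) (i, j, k) (i - 1, j, k + 1))) ∧
    (¬ (RhombAdj (InitConds L) (i, j, k) (i - 1, j - 1, k) ∧
        RhombAdj (InitConds L) (i, j, k) (i, j - 1, k + 1))) ∧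
    {q : ℤ × ℤ × ℤ | RhombAdj (InitConds L) (i, j, k) q}.ncard ≤ 6 := by
  set I := InitConds L with hI
  -- the six exclusions
  have e1 : ¬ (RhombAdj I (i, j, k) (i + 1, j, k + 1) ∧
      RhombAdj I (i, j, k) (i + 1, j - 1, k)) := by
    rintro ⟨h1, h2⟩
    have hx : (i, j - 1, k) ∈ I := CS_extra1 h2
    have hy : (i + 1, j, k + 1) ∈ I := CS_adj_snd_mem h1
    exact CS_no_diag hx (by simpa using hy)
  have e2 : ¬ (RhombAdj I (i, j, k) (i, j - 1, k - 1) ∧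
      RhombAdj I (i, j, k) (i + 1, j, k - 1)) := by
    rintro ⟨h1, h2⟩
    have hx : (i, j - 1, k - 1) ∈ I := CS_adj_snd_mem h1
    have hy : (i + 1, j, k) ∈ I := CS_extra2 h2
    exact CS_no_diag hx (by simpa using hy)
  have e3 : ¬ (RhombAdj I (i, j, k) (i + 1, j + 1, k) ∧
      RhombAdj I (i, j, k) (i, j + 1, k - 1)) := by
    rintro ⟨h1, h2⟩
    have hx : (i, j, k - 1) ∈ I := CS_extra3 h2
    have hy : (i + 1, j + 1, k) ∈ I := CS_adj_snd_mem h1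
    exact CS_no_diag hx (by simpa using hy)
  have e4 : ¬ (RhombAdj I (i, j, k) (i - 1, j, k - 1) ∧
      RhombAdj I (i, j, k) (i - 1, j + 1, k)) := by
    rintro ⟨h1, h2⟩
    have hx : (i - 1, j, k - 1) ∈ I := CS_adj_snd_mem h1
    have hy : (i, j + 1, k) ∈ I := CS_extra4 h2
    exact CS_no_diag hx (by simpa using hy)
  have e5 : ¬ (RhombAdj I (i, j, k) (i, j + 1, k + 1) ∧
      RhombAdj I (i, j, k) (i - 1, j, k + 1)) := by
    rintro ⟨h1, h2⟩
    have hx : (i - 1, j, k) ∈ I := CS_extra5 h2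
    have hy : (i, j + 1, k + 1) ∈ I := CS_adj_snd_mem h1
    exact CS_no_diag hx (by simpa using hy)
  have e6 : ¬ (RhombAdj I (i, j, k) (i - 1, j - 1, k) ∧
      RhombAdj I (i, j, k) (i, j - 1, k + 1)) := by
    rintro ⟨h1, h2⟩
    have hx : (i - 1, j - 1, k) ∈ I := CS_adj_snd_mem h1
    have hy : (i, j, k + 1) ∈ I := CS_extra6 h2
    exact CS_no_diag hx (by simpa using hy)
  refine ⟨e1, e2, e3, e4, e5, e6, ?_⟩
  -- the cardinality bound
  set N := {q : ℤ × ℤ × ℤ | RhombAdj I (i, j, k) q} with hN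
  have hpf : ∀ x y : ℤ × ℤ × ℤ, ({x, y} : Set (ℤ × ℤ × ℤ)).Finite :=
    fun x y => (Set.finite_singleton y).insert x
  have hNsub : N ⊆ (N ∩ {(i + 1, j, k + 1), (i + 1, j - 1, k)})
      ∪ (N ∩ {(i, j - 1, k - 1), (i + 1, j, k - 1)})
      ∪ (N ∩ {(i + 1, j + 1, k), (i, j + 1, k - 1)})
      ∪ (N ∩ {(i - 1, j, k - 1), (i - 1, j + 1, k)})
      ∪ (N ∩ {(i, j + 1, k + 1), (i - 1, j, k + 1)})
      ∪ (N ∩ {(i - 1, j - 1, k), (i, j - 1, k + 1)}) := by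
    intro q hq
    have h12 := CS_adj_target hq
    simp only [Set.mem_insert_iff, Set.mem_singleton_iff] at h12
    rcases h12 with rfl | rfl | rfl | rfl | rfl | rfl | rfl | rfl | rfl | rfl | rfl | rfl
    · exact Or.inl (Or.inl (Or.inl (Or.inl (Or.inl ⟨hq, by simp⟩))))
    · exact Or.inl (Or.inl (Or.inl (Or.inl (Or.inl ⟨hq, by simp⟩))))
    · exact Or.inl (Or.inl (Or.inl (Or.inl (Or.inr ⟨hq, by simp⟩))))
    · exact Or.inl (Or.inl (Or.inl (Or.inl (Or.inr ⟨hq, by simp⟩))))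
    · exact Or.inl (Or.inl (Or.inl (Or.inr ⟨hq, by simp⟩)))
    · exact Or.inl (Or.inl (Or.inl (Or.inr ⟨hq, by simp⟩)))
    · exact Or.inl (Or.inl (Or.inr ⟨hq, by simp⟩))
    · exact Or.inl (Or.inl (Or.inr ⟨hq, by simp⟩))
    · exact Or.inl (Or.inr ⟨hq, by simp⟩)
    · exact Or.inl (Or.inr ⟨hq, by simp⟩)
    · exact Or.inr ⟨hq, by simp⟩
    · exact Or.inr ⟨hq, by simp⟩
  have b1 := CS_pair_bd N _ _ e1
  have b2 := CS_pair_bd N _ _ e2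
  have b3 := CS_pair_bd N _ _ e3
  have b4 := CS_pair_bd N _ _ e4
  have b5 := CS_pair_bd N _ _ e5
  have b6 := CS_pair_bd N _ _ e6
  have hfinU : ((N ∩ {(i + 1, j, k + 1), (i + 1, j - 1, k)})
      ∪ (N ∩ {(i, j - 1, k - 1), (i + 1, j, k - 1)})
      ∪ (N ∩ {(i + 1, j + 1, k), (i, j + 1, k - 1)})
      ∪ (N ∩ {(i - 1, j, k - 1), (i - 1, j + 1, k)})
      ∪ (N ∩ {(i, j + 1, k + 1), (i - 1, j, k + 1)})
      ∪ (N ∩ {(i - 1, j - 1, k), (i, j - 1, k + 1)})).Finite :=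
    ((((((hpf _ _).inter_of_right N).union
      ((hpf _ _).inter_of_right N)).union
      ((hpf _ _).inter_of_right N)).union
      ((hpf _ _).inter_of_right N)).union
      ((hpf _ _).inter_of_right N)).union
      ((hpf _ _).inter_of_right N)
  have step1 := Set.ncard_le_ncard hNsub hfinU
  have u1 := Set.ncard_union_le
    ((N ∩ {(i + 1, j, k + 1), (i + 1, j - 1, k)})
      ∪ (N ∩ {(i, j - 1, k - 1), (i + 1, j, k - 1)})
      ∪ (N ∩ {(i + 1, j + 1, k), (i, j + 1, k - 1)})
      ∪ (N ∩ {(i - 1, j, k - 1), (i - 1, j + 1, k)})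
      ∪ (N ∩ {(i, j + 1, k + 1), (i - 1, j, k + 1)}))
    (N ∩ {(i - 1, j - 1, k), (i, j - 1, k + 1)})
  have u2 := Set.ncard_union_le
    ((N ∩ {(i + 1, j, k + 1), (i + 1, j - 1, k)})
      ∪ (N ∩ {(i, j - 1, k - 1), (i + 1, j, k - 1)})
      ∪ (N ∩ {(i + 1, j + 1, k), (i, j + 1, k - 1)})
      ∪ (N ∩ {(i - 1, j, k - 1), (i - 1, j + 1, k)}))
    (N ∩ {(i, j + 1, k + 1), (i - 1, j, k + 1)})
  have u3 := Set.ncard_union_le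
    ((N ∩ {(i + 1, j, k + 1), (i + 1, j - 1, k)})
      ∪ (N ∩ {(i, j - 1, k - 1), (i + 1, j, k - 1)})
      ∪ (N ∩ {(i + 1, j + 1, k), (i, j + 1, k - 1)}))
    (N ∩ {(i - 1, j, k - 1), (i - 1, j + 1, k)})
  have u4 := Set.ncard_union_le
    ((N ∩ {(i + 1, j, k + 1), (i + 1, j - 1, k)})
      ∪ (N ∩ {(i, j - 1, k - 1), (i + 1, j, k - 1)}))
    (N ∩ {(i + 1, j + 1, k), (i, j + 1, k - 1)})
  have u5 := Set.ncard_union_le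
    (N ∩ {(i + 1, j, k + 1), (i + 1, j - 1, k)})
    (N ∩ {(i, j - 1, k - 1), (i + 1, j, k - 1)})
  omega
end

section
/- Let L ⊆ C(0,0,0) be a lower set with U = C(0,0,0) \ L finite and let I = {(i,j,k) ∈ L : (i+1,j+1,k+1) ∉ L}. Define f(i,j,k) over Q by f(i,j,k) = 1 for (i,j,k) ∈ I and f(i,j,k) = (f(i-1,j,k)·f(i,j-1,k-1) + f(i,j-1,k)·f(i-1,j,k-1) + f(i,j,k-1)·f(i-1,j-1,k)) / f(i-1,j-1,k-1) for (i,j,k) ∈ U with C(i,j,k) ∩ U finite. Then f(i,j,k) is a well-defined positive rational number for every such point; in particular the recursion never divides by zero. -/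
noncomputable def cubeN (L : Set (ℤ × ℤ × ℤ)) (p : ℤ × ℤ × ℤ) : ℕ :=
  (LowerCone p ∩ (LowerCone (0, 0, 0) \ L)).ncard

open Classical in
noncomputable def cubeF (L : Set (ℤ × ℤ × ℤ)) : ℕ → (ℤ × ℤ × ℤ) → ℚ
  | 0, _ => 1
  | n+1, p =>
    if p ∈ LowerCone (0, 0, 0) \ L then
      (cubeF L n (p.1 - 1, p.2.1, p.2.2) * cubeF L n (p.1, p.2.1 - 1, p.2.2 - 1) +
       cubeF L n (p.1, p.2.1 - 1, p.2.2) * cubeF L n (p.1 - 1, p.2.1, p.2.2 - 1) +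
       cubeF L n (p.1, p.2.1, p.2.2 - 1) * cubeF L n (p.1 - 1, p.2.1 - 1, p.2.2)) /
      cubeF L n (p.1 - 1, p.2.1 - 1, p.2.2 - 1)
    else 1

lemma cubeF_not_mem (L : Set (ℤ × ℤ × ℤ)) {p : ℤ × ℤ × ℤ}
    (h : p ∉ LowerCone (0, 0, 0) \ L) : ∀ n, cubeF L n p = 1 := by
  intro n
  cases n with
  | zero => rfl
  | succ n => simp only [cubeF]; rw [if_neg h]

lemma cubeN_pos (L : Set (ℤ × ℤ × ℤ)) (hfin : (LowerCone (0, 0, 0) \ L).Finite)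
    {p : ℤ × ℤ × ℤ} (hp : p ∈ LowerCone (0, 0, 0) \ L) : 0 < cubeN L p := by
  have : p ∈ LowerCone p ∩ (LowerCone (0, 0, 0) \ L) :=
    ⟨⟨le_refl _, le_refl _, le_refl _⟩, hp⟩
  have hf : (LowerCone p ∩ (LowerCone (0, 0, 0) \ L)).Finite :=
    hfin.subset (Set.inter_subset_right)
  exact Set.ncard_pos hf |>.mpr ⟨p, this⟩

/-- A neighbor `q` of `p` (with `q ≤ p ≤ q + (1,1,1)`, `q ≠ p`) that is not in `L`
has strictly smaller rank. -/
lemma cubeN_lt (L : Set (ℤ × ℤ × ℤ)) (hfin : (LowerCone (0, 0, 0) \ L).Finite)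
    {p q : ℤ × ℤ × ℤ} (hp : p ∈ LowerCone (0, 0, 0) \ L)
    (h1 : q.1 ≤ p.1) (h2 : q.2.1 ≤ p.2.1) (h3 : q.2.2 ≤ p.2.2) (hne : q ≠ p) :
    cubeN L q < cubeN L p := by
  apply Set.ncard_lt_ncard
  · constructor
    · intro r hr
      exact ⟨⟨le_trans hr.1.1 h1, le_trans hr.1.2.1 h2, le_trans hr.1.2.2 h3⟩, hr.2⟩
    · intro hcon
      have hmem : p ∈ LowerCone q ∩ (LowerCone (0, 0, 0) \ L) :=
        hcon ⟨⟨le_refl _, le_refl _, le_refl _⟩, hp⟩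
      exact hne (Prod.ext (le_antisymm h1 hmem.1.1)
        (Prod.ext (le_antisymm h2 hmem.1.2.1) (le_antisymm h3 hmem.1.2.2)))
  · exact hfin.subset Set.inter_subset_right

/-- A neighbor of a point of `U` is either an initial condition or in `U`. -/
lemma neighbor_cases (L : Set (ℤ × ℤ × ℤ)) (hlow : IsLowerSet3 L)
    {p q : ℤ × ℤ × ℤ} (hp : p ∈ LowerCone (0, 0, 0) \ L)
    (h1 : q.1 ≤ p.1) (h2 : q.2.1 ≤ p.2.1) (h3 : q.2.2 ≤ p.2.2)
    (g1 : p.1 ≤ q.1 + 1) (g2 : p.2.1 ≤ q.2.1 + 1) (g3 : p.2.2 ≤ q.2.2 + 1) :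
    q ∈ InitConds L ∨ q ∈ LowerCone (0, 0, 0) \ L := by
  by_cases hq : q ∈ L
  · left
    refine ⟨hq, fun hc => hp.2 ?_⟩
    exact hlow _ hc ⟨g1, g2, g3⟩
  · right
    exact ⟨⟨le_trans h1 hp.1.1, le_trans h2 hp.1.2.1, le_trans h3 hp.1.2.2⟩, hq⟩

open Classical in
lemma cubeF_succ (L : Set (ℤ × ℤ × ℤ)) (n : ℕ) (p : ℤ × ℤ × ℤ) :
    cubeF L (n + 1) p =
      (if p ∈ LowerCone (0, 0, 0) \ L then
        (cubeF L n (p.1 - 1, p.2.1, p.2.2) * cubeF L n (p.1, p.2.1 - 1, p.2.2 - 1) +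
         cubeF L n (p.1, p.2.1 - 1, p.2.2) * cubeF L n (p.1 - 1, p.2.1, p.2.2 - 1) +
         cubeF L n (p.1, p.2.1, p.2.2 - 1) * cubeF L n (p.1 - 1, p.2.1 - 1, p.2.2)) /
        cubeF L n (p.1 - 1, p.2.1 - 1, p.2.2 - 1)
      else 1) := rfl

/-- Stability: once the fuel exceeds the rank, the value stops changing. -/
lemma cubeF_stable (L : Set (ℤ × ℤ × ℤ)) (hfin : (LowerCone (0, 0, 0) \ L).Finite) :
    ∀ k p n, cubeN L p ≤ k → cubeN L p ≤ n → cubeF L n p = cubeF L (n + 1) p := by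
  intro k
  induction k with
  | zero =>
    intro p n hk _
    by_cases hp : p ∈ LowerCone (0, 0, 0) \ L
    · exact absurd hk (by have := cubeN_pos L hfin hp; omega)
    · rw [cubeF_not_mem L hp, cubeF_not_mem L hp]
  | succ k ih =>
    intro p n hk hn
    by_cases hp : p ∈ LowerCone (0, 0, 0) \ L
    · obtain ⟨m, rfl⟩ : ∃ m, n = m + 1 := by
        have := cubeN_pos L hfin hp
        exact ⟨n - 1, by omega⟩
      have key : ∀ a b c : ℤ, a ≤ p.1 → b ≤ p.2.1 → c ≤ p.2.2 →
          (a < p.1 ∨ b < p.2.1 ∨ c < p.2.2) →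
          cubeF L m (a, b, c) = cubeF L (m + 1) (a, b, c) := by
        intro a b c a1 a2 a3 ane
        have hne : (a, b, c) ≠ p := fun h => by
          subst h; rcases ane with h' | h' | h' <;> simp at h'
        by_cases hq : (a, b, c) ∈ LowerCone (0, 0, 0) \ L
        · have hlt := cubeN_lt L hfin hp a1 a2 a3 hne
          exact ih (a, b, c) m (by omega) (by omega)
        · rw [cubeF_not_mem L hq, cubeF_not_mem L hq]
      rw [cubeF_succ, cubeF_succ, if_pos hp, if_pos hp,
        key (p.1 - 1) p.2.1 p.2.2 (by omega) le_rfl le_rfl (by omega),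
        key p.1 (p.2.1 - 1) (p.2.2 - 1) le_rfl (by omega) (by omega) (by omega),
        key p.1 (p.2.1 - 1) p.2.2 le_rfl (by omega) le_rfl (by omega),
        key (p.1 - 1) p.2.1 (p.2.2 - 1) (by omega) le_rfl (by omega) (by omega),
        key p.1 p.2.1 (p.2.2 - 1) le_rfl le_rfl (by omega) (by omega),
        key (p.1 - 1) (p.2.1 - 1) p.2.2 (by omega) (by omega) le_rfl (by omega),
        key (p.1 - 1) (p.2.1 - 1) (p.2.2 - 1) (by omega) (by omega) (by omega) (by omega)]
    · rw [cubeF_not_mem L hp, cubeF_not_mem L hp]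

lemma cubeF_eq_of_le (L : Set (ℤ × ℤ × ℤ)) (hfin : (LowerCone (0, 0, 0) \ L).Finite)
    {p : ℤ × ℤ × ℤ} {n m : ℕ} (hn : cubeN L p ≤ n) (hnm : n ≤ m) :
    cubeF L n p = cubeF L m p := by
  induction m, hnm using Nat.le_induction with
  | base => rfl
  | succ m hm ih => rw [ih, cubeF_stable L hfin (cubeN L p) p m le_rfl (le_trans hn hm)]

lemma cubeF_pos (L : Set (ℤ × ℤ × ℤ)) (hfin : (LowerCone (0, 0, 0) \ L).Finite) :
    ∀ k p n, cubeN L p ≤ k → cubeN L p ≤ n → 0 < cubeF L n p := by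
  intro k
  induction k with
  | zero =>
    intro p n hk _
    by_cases hp : p ∈ LowerCone (0, 0, 0) \ L
    · exact absurd hk (by have := cubeN_pos L hfin hp; omega)
    · rw [cubeF_not_mem L hp]; exact one_pos
  | succ k ih =>
    intro p n hk hn
    by_cases hp : p ∈ LowerCone (0, 0, 0) \ L
    · obtain ⟨m, rfl⟩ : ∃ m, n = m + 1 := by
        have := cubeN_pos L hfin hp
        exact ⟨n - 1, by omega⟩
      have key : ∀ a b c : ℤ, a ≤ p.1 → b ≤ p.2.1 → c ≤ p.2.2 →
          (a < p.1 ∨ b < p.2.1 ∨ c < p.2.2) → 0 < cubeF L m (a, b, c) := by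
        intro a b c a1 a2 a3 ane
        have hne : (a, b, c) ≠ p := fun h => by
          subst h; rcases ane with h' | h' | h' <;> simp at h'
        by_cases hq : (a, b, c) ∈ LowerCone (0, 0, 0) \ L
        · have hlt := cubeN_lt L hfin hp a1 a2 a3 hne
          exact ih (a, b, c) m (by omega) (by omega)
        · rw [cubeF_not_mem L hq]; exact one_pos
      rw [cubeF_succ, if_pos hp]
      apply div_pos
      · exact add_pos (add_pos
          (mul_pos (key (p.1 - 1) p.2.1 p.2.2 (by omega) le_rfl le_rfl (by omega))
            (key p.1 (p.2.1 - 1) (p.2.2 - 1) le_rfl (by omega) (by omega) (by omega)))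
          (mul_pos (key p.1 (p.2.1 - 1) p.2.2 le_rfl (by omega) le_rfl (by omega))
            (key (p.1 - 1) p.2.1 (p.2.2 - 1) (by omega) le_rfl (by omega) (by omega))))
          (mul_pos (key p.1 p.2.1 (p.2.2 - 1) le_rfl le_rfl (by omega) (by omega))
            (key (p.1 - 1) (p.2.1 - 1) p.2.2 (by omega) (by omega) le_rfl (by omega)))
      · exact key (p.1 - 1) (p.2.1 - 1) (p.2.2 - 1) (by omega) (by omega) (by omega) (by omega)
    · rw [cubeF_not_mem L hp]; exact one_pos

/-- A point not in `L` whose lower cone meets the complement of `L` in a finite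
set must lie in the lower cone of the origin. -/
lemma mem_cone_of_finite (L : Set (ℤ × ℤ × ℤ)) (hsub : L ⊆ LowerCone (0, 0, 0))
    {p : ℤ × ℤ × ℤ} (hpL : p ∉ L) (hf : (LowerCone p \ L).Finite) :
    p ∈ LowerCone (0, 0, 0) := by
  by_contra hc
  simp only [LowerCone, Set.mem_setOf_eq, not_and_or, not_le] at hc
  rcases hc with h | h | h
  · refine absurd hf (Set.infinite_of_injective_forall_mem
      (f := fun t : ℕ => ((1 : ℤ), p.2.1 - t, p.2.2)) ?_ ?_)
    · intro a b hab
      have := congrArg (fun q : ℤ × ℤ × ℤ => q.2.1) hab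
      simp at this; omega
    · intro t
      refine ⟨⟨by simp; omega, by simp, le_rfl⟩, fun hL => ?_⟩
      have := (hsub hL).1
      norm_num at this
  · refine absurd hf (Set.infinite_of_injective_forall_mem
      (f := fun t : ℕ => (p.1 - t, (1 : ℤ), p.2.2)) ?_ ?_)
    · intro a b hab
      have := congrArg (fun q : ℤ × ℤ × ℤ => q.1) hab
      simp at this; omega
    · intro t
      refine ⟨⟨by simp, by simp; omega, le_rfl⟩, fun hL => ?_⟩
      have := (hsub hL).2.1
      norm_num at this
  · refine absurd hf (Set.infinite_of_injective_forall_mem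
      (f := fun t : ℕ => (p.1 - t, p.2.1, (1 : ℤ))) ?_ ?_)
    · intro a b hab
      have := congrArg (fun q : ℤ × ℤ × ℤ => q.1) hab
      simp at this; omega
    · intro t
      refine ⟨⟨by simp, le_rfl, by simp; omega⟩, fun hL => ?_⟩
      have := (hsub hL).2.2
      norm_num at this

noncomputable def cubef (L : Set (ℤ × ℤ × ℤ)) (p : ℤ × ℤ × ℤ) : ℚ :=
  cubeF L (cubeN L p) p

lemma cubef_def (L : Set (ℤ × ℤ × ℤ)) (p : ℤ × ℤ × ℤ) :
    cubef L p = cubeF L (cubeN L p) p := rfl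

/-- with all initial values set to `1`, the cube recurrence is
well defined (never divides by zero) and produces a positive rational at every
point of `U` whose lower cone meets `U` in a finite set: there is a function `f`
equal to `1` on `I`, positive on all relevant points, and satisfying the
recurrence (stated multiplicatively, so positivity of `f(i-1,j-1,k-1)` makes the
division legitimate). -/
theorem stmt17 (L : Set (ℤ × ℤ × ℤ))
    (hlow : IsLowerSet3 L)
    (hsub : L ⊆ LowerCone (0, 0, 0))
    (hfin : (LowerCone (0, 0, 0) \ L).Finite) :
    ∃ f : ℤ × ℤ × ℤ → ℚ,
      (∀ p ∈ InitConds L, f p = 1) ∧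
      (∀ p : ℤ × ℤ × ℤ, p ∈ InitConds L ∨
          (p ∉ L ∧ (LowerCone p \ L).Finite) → 0 < f p) ∧
      (∀ i j k : ℤ, (i, j, k) ∉ L → (LowerCone (i, j, k) \ L).Finite →
        f (i, j, k) =
          (f (i - 1, j, k) * f (i, j - 1, k - 1) + f (i, j - 1, k) * f (i - 1, j, k - 1) +
              f (i, j, k - 1) * f (i - 1, j - 1, k)) / f (i - 1, j - 1, k - 1)) := by
  refine ⟨cubef L, ?_, ?_, ?_⟩
  · intro p hp
    exact cubeF_not_mem L (fun h => h.2 hp.1) _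
  · intro p hp
    rcases hp with hp | ⟨hpL, hpf⟩
    · rw [cubef_def, cubeF_not_mem L (fun h => h.2 hp.1)]; exact one_pos
    · exact cubeF_pos L hfin (cubeN L p) p (cubeN L p) le_rfl le_rfl
  · intro i j k hL hf
    have hp : (i, j, k) ∈ LowerCone (0, 0, 0) \ L :=
      ⟨mem_cone_of_finite L hsub hL hf, hL⟩
    obtain ⟨m, hm⟩ : ∃ m, cubeN L (i, j, k) = m + 1 := by
      have := cubeN_pos L hfin hp
      exact ⟨cubeN L (i, j, k) - 1, by omega⟩
    have key : ∀ a b c : ℤ, a ≤ i → b ≤ j → c ≤ k →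
        (a < i ∨ b < j ∨ c < k) → cubef L (a, b, c) = cubeF L m (a, b, c) := by
      intro a b c a1 a2 a3 ane
      have hne : (a, b, c) ≠ (i, j, k) := fun h => by
        rcases ane with h' | h' | h' <;> (rw [Prod.ext_iff, Prod.ext_iff] at h; simp at h; omega)
      by_cases hq : (a, b, c) ∈ LowerCone (0, 0, 0) \ L
      · have hlt := cubeN_lt L hfin hp a1 a2 a3 hne
        exact cubeF_eq_of_le L hfin le_rfl (by omega)
      · rw [cubef_def, cubeF_not_mem L hq, cubeF_not_mem L hq]
    rw [cubef_def, hm, cubeF_succ, if_pos hp,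
      key (i - 1) j k (by omega) le_rfl le_rfl (by omega),
      key i (j - 1) (k - 1) le_rfl (by omega) (by omega) (by omega),
      key i (j - 1) k le_rfl (by omega) le_rfl (by omega),
      key (i - 1) j (k - 1) (by omega) le_rfl (by omega) (by omega),
      key i j (k - 1) le_rfl le_rfl (by omega) (by omega),
      key (i - 1) (j - 1) k (by omega) (by omega) le_rfl (by omega),
      key (i - 1) (j - 1) (k - 1) (by omega) (by omega) (by omega) (by omega)]
end
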